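/- arXiv:1909.05431 — 11 statements merged into one kernel-verified Lean document; each statement's English description precedes it below -/
import Mathlib

section
/- Let a₁ < a₂ be coprime integers with 1 < a₁, and let n ≥ a₁ - 1. Then the set {a₁(n-j) + a₂ j : j ∈ {0,...,a₁-1}} is disjoint from {a₁β₁ + a₂β₂ : β₁, β₂ ∈ ℕ, β₁ + β₂ ≥ n+1}. -/
theorem stmt_2 (a₁ a₂ : ℕ) (h1 : 1 < a₁) (h12 : a₁ < a₂)
    (hcop : Nat.Coprime a₁ a₂) (n : ℕ) (hn : a₁ - 1 ≤ n) :
    Disjoint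
      {x : ℕ | ∃ j : ℕ, j ≤ a₁ - 1 ∧ x = a₁ * (n - j) + a₂ * j}
      {x : ℕ | ∃ β₁ β₂ : ℕ, n + 1 ≤ β₁ + β₂ ∧ x = a₁ * β₁ + a₂ * β₂} := by
  rw [Set.disjoint_left]
  rintro x ⟨j, hj, rfl⟩ ⟨β₁, β₂, hb, heq⟩
  have hjn : j ≤ n := le_trans hj hn
  zify [hjn] at heq
  have key : (a₁ : ℤ) * (β₁ + β₂ - n) = (a₂ - a₁) * (j - β₂) := by linarith [heq]
  have hcopZ : IsCoprime (a₁ : ℤ) ((a₂ : ℤ) - a₁) := by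
    have h : IsCoprime (a₁ : ℤ) (a₂ : ℤ) := Int.isCoprime_iff_gcd_eq_one.mpr (by simpa [Int.gcd_natCast_natCast] using hcop)
    have := h.add_mul_left_right (-1)
    simpa [sub_eq_add_neg, mul_comm] using this
  have hdvd : (a₁ : ℤ) ∣ (j - β₂) :=
    hcopZ.dvd_of_dvd_mul_left ⟨(β₁ + β₂ - n : ℤ), key.symm⟩
  have hpos : (0 : ℤ) < (a₂ - a₁) * (j - β₂) := by
    rw [← key]
    have h2 : (n : ℤ) + 1 ≤ β₁ + β₂ := by exact_mod_cast hb
    have : (0 : ℤ) < (β₁ + β₂ - n : ℤ) := by linarith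
    positivity
  have ha : (0 : ℤ) < (a₂ : ℤ) - a₁ := by
    have : (a₁ : ℤ) < a₂ := by exact_mod_cast h12
    linarith
  have hjb : (0 : ℤ) < (j : ℤ) - β₂ := by
    rcases mul_pos_iff.mp hpos with ⟨_, h⟩ | ⟨h, _⟩
    · exact h
    · linarith
  have hle : (a₁ : ℤ) ≤ (j : ℤ) - β₂ := Int.le_of_dvd hjb hdvd
  have hj' : (j : ℤ) ≤ a₁ - 1 := by
    have := hj; omega
  omega
end

section
/- Let a₁ < a₂ be coprime integers with 1 < a₁. For every n ≥ a₁ - 1, the cardinality of S⁽ⁿ⁾ \ S⁽ⁿ⁺¹⁾ equals a₁, where S⁽ⁿ⁾ := {0} ∪ {a₁α₁ + a₂α₂ : α₁+α₂ ≥ n, α₁, α₂ ∈ ℕ}. Equivalently, the multiplicity filtration of the plane toric curve defined by {a₁, a₂} stabilizes at value a₁ from n = a₁ - 1 onward. -/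
/-- `S⁽ⁿ⁾ = {0} ∪ {a₁α₁ + a₂α₂ : α₁ + α₂ ≥ n}` for a two-generator semigroup. -/
def S2 (a₁ a₂ n : ℕ) : Set ℕ :=
  {0} ∪ {s | ∃ α₁ α₂ : ℕ, n ≤ α₁ + α₂ ∧ s = a₁ * α₁ + a₂ * α₂}

lemma key_aux (a₁ a₂ : ℕ) (h1 : 1 < a₁) (h12 : a₁ < a₂) (hcop : Nat.Coprime a₁ a₂)
    (n r β₁ β₂ : ℕ) (hr : r < a₁) (hrn : r ≤ n)
    (heq : a₁ * β₁ + a₂ * β₂ = a₁ * n + (a₂ - a₁) * r) :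
    β₁ + β₂ ≤ n := by
  have hc : IsCoprime (a₁ : ℤ) (a₂ : ℤ) := by
    rw [Int.isCoprime_iff_gcd_eq_one]
    exact_mod_cast hcop
  have heqz : (a₁:ℤ) * β₁ + a₂ * β₂ = a₁ * n + ((a₂:ℤ) - a₁) * r := by
    zify [h12.le] at heq
    linarith [heq]
  have hdvd : (a₁:ℤ) ∣ a₂ * ((r:ℤ) - β₂) := ⟨(β₁:ℤ) - n + r, by linear_combination -heqz⟩
  obtain ⟨t, ht⟩ := (hc.dvd_of_dvd_mul_left hdvd)
  have ht0 : t ≤ 0 := by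
    by_contra h
    push_neg at h
    have h1t : (1:ℤ) ≤ t := h
    have : (a₁:ℤ) * 1 ≤ a₁ * t := by
      apply mul_le_mul_of_nonneg_left h1t (by positivity)
    have hb2 : (0:ℤ) ≤ β₂ := by positivity
    have hra : (r:ℤ) < a₁ := by exact_mod_cast hr
    linarith
  have hβ₁ : (a₁:ℤ) * β₁ = a₁ * ((n:ℤ) - r + a₂ * t) := by
    linear_combination heqz + a₂ * ht
  have hβ₁' : (β₁:ℤ) = (n:ℤ) - r + a₂ * t :=
    mul_left_cancel₀ (by positivity) hβ₁
  have hβ₂ : (β₂:ℤ) = (r:ℤ) - a₁ * t := by linarith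
  have : (β₁:ℤ) + β₂ ≤ n := by
    have h21 : (0:ℤ) < (a₂:ℤ) - a₁ := by
      have : (a₁:ℤ) < a₂ := by exact_mod_cast h12
      linarith
    nlinarith
  exact_mod_cast this

theorem stmt_3 (a₁ a₂ : ℕ) (h1 : 1 < a₁) (h12 : a₁ < a₂)
    (hcop : Nat.Coprime a₁ a₂) (n : ℕ) (hn : a₁ - 1 ≤ n) :
    (S2 a₁ a₂ n \ S2 a₁ a₂ (n + 1)).ncard = a₁ := by
  have hn1 : 1 ≤ n := by omega
  have hset : S2 a₁ a₂ n \ S2 a₁ a₂ (n+1)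
      = (fun r => a₁ * n + (a₂ - a₁) * r) '' ↑(Finset.range a₁) := by
    ext s
    simp only [Set.mem_diff, Set.mem_image, Finset.coe_range, Set.mem_Iio, S2,
      Set.mem_union, Set.mem_singleton_iff, Set.mem_setOf_eq]
    constructor
    · rintro ⟨hmem, hnot⟩
      push_neg at hnot
      obtain ⟨hne0, hnot⟩ := hnot
      rcases hmem with h0 | ⟨α₁, α₂, hsum, rfl⟩
      · exact absurd h0 hne0
      have hsum_eq : α₁ + α₂ = n := by
        by_contra h
        exact (hnot α₁ α₂ (by omega)) rfl
      have hα₂ : α₂ < a₁ := by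
        by_contra h
        push_neg at h
        apply hnot (α₁ + a₂) (α₂ - a₁) (by omega)
        zify [h]
        ring
      refine ⟨α₂, hα₂, ?_⟩
      have hrn : α₂ ≤ n := by omega
      zify [h12.le]
      have hcast : (α₁:ℤ) + α₂ = n := by exact_mod_cast hsum_eq
      linear_combination -(a₁:ℤ) * hcast
    · rintro ⟨r, hr, rfl⟩
      have hrn : r ≤ n := by omega
      refine ⟨Or.inr ⟨n - r, r, by omega, by zify [hrn, h12.le]; ring⟩, ?_⟩
      rintro (h0 | ⟨β₁, β₂, hb, heq⟩)
      · have : 0 < a₁ * n := by positivity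
        omega
      · have := key_aux a₁ a₂ h1 h12 hcop n r β₁ β₂ hr hrn heq.symm
        omega
  rw [hset, Set.ncard_image_of_injOn, Set.ncard_coe_finset, Finset.card_range]
  intro x _ y _ h
  simp only at h
  have : (a₂ - a₁) * x = (a₂ - a₁) * y := by omega
  exact Nat.eq_of_mul_eq_mul_left (by omega) this
end

section
/- Let S = ⟨a₁,...,a_r⟩ be a numerical semigroup with minimal generators 1 < a₁ < ⋯ < a_r, gcd = 1, and let F(S) be its Frobenius number. For n ≥ 1 define S⁽ⁿ⁾ := {0} ∪ {a·α : α ∈ ℕʳ, |α| ≥ n} and F(S⁽ⁿ⁾) its Frobenius number. Then F(S⁽ⁿ⁺¹⁾) ≤ F(S⁽ⁿ⁾) + a₁ for all n ≥ 1. -/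
/-- `S⁽ⁿ⁾ = {0} ∪ {a·α : α ∈ ℕʳ, |α| ≥ n}`. -/
def Sn {r : ℕ} (a : Fin r → ℕ) (n : ℕ) : Set ℕ :=
  {0} ∪ {s | ∃ α : Fin r → ℕ, n ≤ ∑ i, α i ∧ s = ∑ i, a i * α i}

theorem stmt_4 (r : ℕ) (a : Fin (r + 1) → ℕ)
    (ha : StrictMono a) (h1 : 1 < a 0)
    (hgcd : Finset.univ.gcd a = 1)
    (hmin : ∀ i, a i ∉ AddSubmonoid.closure (a '' {i}ᶜ))
    (n : ℕ) (hn : 1 ≤ n) (Fn Fn1 : ℕ)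
    (hFn : IsGreatest {m : ℕ | m ∉ Sn a n} Fn)
    (hFn1 : IsGreatest {m : ℕ | m ∉ Sn a (n + 1)} Fn1) :
    Fn1 ≤ Fn + a 0 := by
  by_contra hlt
  push_neg at hlt
  -- Fn + a 0 < Fn1, so Fn1 - a 0 > Fn, hence Fn1 - a 0 ∈ Sn a n
  have ha0 : a 0 ≤ Fn1 := le_trans (Nat.le_add_left _ _) hlt.le
  have hgt : Fn < Fn1 - a 0 := by omega
  have hmem : Fn1 - a 0 ∈ Sn a n := by
    by_contra hc
    exact absurd (hFn.2 hc) (not_le.mpr hgt)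
  rcases hmem with h0 | ⟨α, hα, hs⟩
  · simp only [Set.mem_singleton_iff] at h0
    omega
  · apply hFn1.1
    right
    refine ⟨fun i => α i + (if i = 0 then 1 else 0), ?_, ?_⟩
    · show n + 1 ≤ ∑ i, (α i + (if i = 0 then 1 else 0))
      have : ∑ i, (α i + (if i = 0 then 1 else 0)) = (∑ i, α i) + 1 := by
        rw [Finset.sum_add_distrib, Finset.sum_ite_eq' Finset.univ (0 : Fin (r+1)) (fun _ => 1)]
        simp
      omega
    · show Fn1 = ∑ i, a i * (α i + (if i = 0 then 1 else 0))
      have : ∑ i, a i * (α i + (if i = 0 then 1 else 0)) = (∑ i, a i * α i) + a 0 := by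
        simp only [mul_add, Finset.sum_add_distrib, mul_ite, mul_one, mul_zero]
        rw [Finset.sum_ite_eq' Finset.univ (0 : Fin (r+1)) a]
        simp
      omega
end

section
/- Let S and S⁽ⁿ⁾ be as above with a₁ < a₂ < F(S), and q defined by δ = F(S) - a₁ = q(a₂ - a₁) + τ, 0 ≤ τ < a₂ - a₁. Then for every n ≥ q, F(S⁽ⁿ⁺¹⁾) = F(S⁽ⁿ⁾) + a₁ and F(S⁽ⁿ⁺¹⁾) < (n+1)·a₂. -/
namespace Sn

variable {r : ℕ} (a : Fin r → ℕ)

lemma sum_add_single (α : Fin r → ℕ) (i : Fin r) :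
    ∑ j, (α + Pi.single i 1 : Fin r → ℕ) j = ∑ j, α j + 1 := by
  simp only [Pi.add_apply, Finset.sum_add_distrib, Fintype.sum_pi_single']

lemma weighted_sum_add_single (α : Fin r → ℕ) (i : Fin r) :
    ∑ j, a j * (α + Pi.single i 1 : Fin r → ℕ) j = ∑ j, a j * α j + a i := by
  simp [mul_add, Finset.sum_add_distrib, Pi.single_apply]

variable {a}

lemma add_mem_succ {s n : ℕ} (i : Fin r) (hs : s ∈ Sn a n) (hs0 : s ≠ 0) :
    s + a i ∈ Sn a (n + 1) := by
  obtain ⟨α, hα, rfl⟩ := hs.resolve_left hs0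
  exact Or.inr ⟨α + Pi.single i 1, by rw [sum_add_single]; omega,
    (weighted_sum_add_single a α i).symm⟩

lemma mem_of_add_eq {s n : ℕ} {α : Fin r → ℕ} {i : Fin r} (hα : n + 1 ≤ ∑ j, α j)
    (hi : α i ≠ 0) (hs : s + a i = ∑ j, a j * α j) : s ∈ Sn a n := by
  obtain ⟨β, rfl⟩ : ∃ β, α = β + Pi.single i 1 :=
    ⟨α - Pi.single i 1, by
      ext j
      rcases eq_or_ne j i with rfl | hj
      · simp only [Pi.add_apply, Pi.sub_apply, Pi.single_eq_same]; omega
      · simp [hj]⟩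
  rw [sum_add_single] at hα
  rw [weighted_sum_add_single] at hs
  exact Or.inr ⟨β, by omega, by omega⟩

lemma mem_of_add_mul_lt {F : ℕ} {n : ℕ} (hF : ∀ m, F < m → m ∈ Sn a n) (i : Fin r) :
    ∀ k m, F + k * a i < m → m ∈ Sn a (n + k)
  | 0, m, hm => hF m (by simpa using hm)
  | k + 1, m, hm => by
    rw [add_one_mul, ← add_assoc] at hm
    have h := add_mem_succ i (mem_of_add_mul_lt hF i k (m - a i) (by omega)) (by omega)
    rwa [Nat.sub_add_cancel (by omega)] at h

lemma isGreatest_add {n F : ℕ} (i : Fin r) (hF : IsGreatest {m | m ∉ Sn a n} F)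
    (hFi : F + a i ∉ Sn a (n + 1)) : IsGreatest {m | m ∉ Sn a (n + 1)} (F + a i) := by
  refine ⟨hFi, fun m hm => not_lt.1 fun hlt => hm ?_⟩
  have h : m - a i ∈ Sn a n := not_not.1 fun h => (hF.2 h).not_gt (by omega)
  simpa [Nat.sub_add_cancel (by omega : a i ≤ m)] using add_mem_succ i h (by omega)

lemma sum_mul_le_weighted_sum {α : Fin r → ℕ} {b : ℕ} (hb : ∀ j, α j ≠ 0 → b ≤ a j) :
    (∑ j, α j) * b ≤ ∑ j, a j * α j := by
  rw [Finset.sum_mul]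
  refine Finset.sum_le_sum fun j _ => ?_
  rcases eq_or_ne (α j) 0 with h | h
  · simp [h]
  · rw [mul_comm]; exact Nat.mul_le_mul_right _ (hb j h)

lemma add_notMem_succ {s n b : ℕ} {i : Fin r} (hb : ∀ j, j ≠ i → b ≤ a j)
    (hlt : s + a i < (n + 1) * b) (hs : s ∉ Sn a n) : s + a i ∉ Sn a (n + 1) := by
  rintro (h0 | ⟨α, hα, hsum⟩)
  · rw [Set.mem_singleton_iff, Nat.add_eq_zero_iff] at h0
    exact hs (Or.inl h0.1)
  · by_cases hi : α i = 0
    · have := sum_mul_le_weighted_sum (b := b) (α := α)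
        fun j hj => hb j fun h => hj (h ▸ hi)
      have := Nat.mul_le_mul_right b hα
      omega
    · exact hs (mem_of_add_eq hα hi hsum)

end Sn

lemma add_mul_lt_of_sub_eq {a₀ a₁ F q τ n : ℕ} (hτ : τ < a₁ - a₀)
    (hdecomp : F - a₀ = q * (a₁ - a₀) + τ) (hqn : q ≤ n) : F + n * a₀ < (n + 1) * a₁ := by
  have hd : q * (a₁ - a₀) + τ < (n + 1) * (a₁ - a₀) :=
    calc q * (a₁ - a₀) + τ < (q + 1) * (a₁ - a₀) := by rw [add_one_mul]; omega
      _ ≤ (n + 1) * (a₁ - a₀) := Nat.mul_le_mul_right _ (by omega)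
  calc F + n * a₀ ≤ (F - a₀) + (n + 1) * a₀ := by rw [add_one_mul]; omega
    _ < (n + 1) * (a₁ - a₀) + (n + 1) * a₀ := by omega
    _ = (n + 1) * a₁ := by rw [← mul_add, Nat.sub_add_cancel (by omega)]

theorem stmt_6_general (r : ℕ) (a : Fin (r + 2) → ℕ)
    (ha : StrictMono a)
    (F : ℕ) (hF : IsGreatest {m : ℕ | m ∉ Sn a 1} F)
    (q τ : ℕ) (hq : 1 ≤ q) (hτ : τ < a 1 - a 0)
    (hdecomp : F - a 0 = q * (a 1 - a 0) + τ)
    (n : ℕ) (hn : q ≤ n) (Fn : ℕ)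
    (hFn : IsGreatest {m : ℕ | m ∉ Sn a n} Fn) :
    IsGreatest {m : ℕ | m ∉ Sn a (n + 1)} (Fn + a 0) ∧
    Fn + a 0 < (n + 1) * a 1 := by
  have hS : ∀ m, F < m → m ∈ Sn a 1 := fun m hm => not_not.1 fun h => (hF.2 h).not_gt hm
  have hkey : F + n * a 0 < (n + 1) * a 1 := add_mul_lt_of_sub_eq hτ hdecomp hn
  have hbound : Fn + a 0 < (n + 1) * a 1 := by
    obtain ⟨k, rfl⟩ : ∃ k, n = k + 1 := ⟨n - 1, by omega⟩
    refine not_le.1 fun hle => hFn.1 ?_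
    rw [add_comm k]
    exact Sn.mem_of_add_mul_lt hS 0 k Fn (by rw [add_one_mul] at hkey; omega)
  have ha1 : ∀ j, j ≠ 0 → a 1 ≤ a j := fun j hj => ha.monotone (Fin.one_le_of_ne_zero hj)
  exact ⟨Sn.isGreatest_add 0 hFn (Sn.add_notMem_succ ha1 hbound hFn.1), hbound⟩

theorem stmt_6 (r : ℕ) (a : Fin (r + 2) → ℕ)
    (ha : StrictMono a) (h1 : 1 < a 0)
    (hgcd : Finset.univ.gcd a = 1)
    (hmin : ∀ i, a i ∉ AddSubmonoid.closure (a '' {i}ᶜ))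
    (F : ℕ) (hF : IsGreatest {m : ℕ | m ∉ Sn a 1} F) (hFa2 : a 1 < F)
    (q τ : ℕ) (hq : 1 ≤ q) (hτ : τ < a 1 - a 0)
    (hdecomp : F - a 0 = q * (a 1 - a 0) + τ)
    (n : ℕ) (hn : q ≤ n) (Fn : ℕ)
    (hFn : IsGreatest {m : ℕ | m ∉ Sn a n} Fn) :
    IsGreatest {m : ℕ | m ∉ Sn a (n + 1)} (Fn + a 0) ∧
    Fn + a 0 < (n + 1) * a 1 :=
  stmt_6_general r a ha F hF q τ hq hτ hdecomp n hn Fn hFn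
end

section
/- With the hypotheses above (a₁ < a₂ < F(S), q as defined), for all n ≥ q: S⁽ⁿ⁺¹⁾ = (S⁽ⁿ⁾ \ {0}) + a₁ ∪ {0}; that is, every nonzero element of S⁽ⁿ⁺¹⁾ is of the form s + a₁ for some s ∈ S⁽ⁿ⁾, and conversely s + a₁ ∈ S⁽ⁿ⁺¹⁾ for all s ∈ S⁽ⁿ⁾. -/
section aux
variable {r : ℕ}

lemma aux_split (f : Fin (r+2) → ℕ) :
    ∑ i, f i = f 0 + ∑ i : Fin (r+1), f i.succ := Fin.sum_univ_succ f

lemma aux_sum_update (a β : Fin (r+2) → ℕ) (v : ℕ) :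
    ∑ i, a i * Function.update β 0 v i
      = a 0 * v + ∑ i : Fin (r+1), a i.succ * β i.succ := by
  rw [aux_split (fun i => a i * Function.update β 0 v i)]
  simp [Function.update_of_ne (Fin.succ_ne_zero _)]

lemma aux_sum_update' (β : Fin (r+2) → ℕ) (v : ℕ) :
    ∑ i, Function.update β 0 v i = v + ∑ i : Fin (r+1), β i.succ := by
  rw [aux_split (Function.update β 0 v)]
  simp [Function.update_of_ne (Fin.succ_ne_zero _)]

end aux

theorem stmt_7 (r : ℕ) (a : Fin (r + 2) → ℕ)
    (ha : StrictMono a) (h1 : 1 < a 0)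
    (hgcd : Finset.univ.gcd a = 1)
    (hmin : ∀ i, a i ∉ AddSubmonoid.closure (a '' {i}ᶜ))
    (F : ℕ) (hF : IsGreatest {m : ℕ | m ∉ Sn a 1} F) (hFa2 : a 1 < F)
    (q τ : ℕ) (hq : 1 ≤ q) (hτ : τ < a 1 - a 0)
    (hdecomp : F - a 0 = q * (a 1 - a 0) + τ)
    (n : ℕ) (hn : q ≤ n) :
    Sn a (n + 1) = ((fun s => s + a 0) '' (Sn a n \ {0})) ∪ {0} := by
  have h01 : a 0 < a 1 := ha (by simp [Fin.lt_def])
  have hbase : ∀ i : Fin (r+2), a 0 ≤ a i := fun i => ha.monotone (Fin.zero_le i)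
  have hsum_lb : ∀ β : Fin (r+2) → ℕ, a 0 * (∑ i, β i) ≤ ∑ i, a i * β i := by
    intro β
    rw [Finset.mul_sum]
    exact Finset.sum_le_sum fun i _ => Nat.mul_le_mul_right _ (hbase i)
  have hn1 : 1 ≤ n := hq.trans hn
  ext x
  simp only [Sn, Set.mem_union, Set.mem_singleton_iff, Set.mem_setOf_eq, Set.mem_image,
    Set.mem_diff]
  constructor
  · rintro (rfl | ⟨α, hα, rfl⟩)
    · right; rfl
    · left
      have hαsplit := aux_split α
      have hasplit := aux_split (fun i => a i * α i)
      by_cases hα0 : 0 < α 0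
      · -- α uses a 0; just remove one copy
        set γ := Function.update α 0 (α 0 - 1) with hγ
        have hdeg : n ≤ ∑ i, γ i := by
          rw [hγ, aux_sum_update']
          omega
        have hA : a 0 * (α 0 - 1) + a 0 = a 0 * α 0 := by
          have h' : α 0 - 1 + 1 = α 0 := Nat.succ_pred_eq_of_pos hα0
          calc a 0 * (α 0 - 1) + a 0 = a 0 * ((α 0 - 1) + 1) := by ring
            _ = a 0 * α 0 := by rw [h']
        have hval : (∑ i, a i * γ i) + a 0 = ∑ i, a i * α i := by
          rw [hγ, aux_sum_update]
          omega
        refine ⟨∑ i, a i * γ i, ⟨Or.inr ⟨γ, hdeg, rfl⟩, ?_⟩, hval⟩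
        · intro h0
          have hpos : 0 < a 0 * (∑ i, γ i) := Nat.mul_pos (by omega) (by omega)
          have := hsum_lb γ
          omega
      · -- α 0 = 0 : hard case
        have hα00 : α 0 = 0 := by omega
        set s := ∑ i, a i * α i with hs
        have hs1 : a 1 * (n + 1) ≤ s := by
          have step : ∀ i : Fin (r+2), a 1 * α i ≤ a i * α i := by
            intro i
            rcases eq_or_ne i 0 with rfl | hi
            · simp [hα00]
            · have h1i : (1 : Fin (r+2)) ≤ i := by
                rw [Fin.le_def]
                have : i.val ≠ 0 := fun h' => hi (Fin.ext h')
                simp only [Fin.val_one]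
                omega
              exact Nat.mul_le_mul_right _ (ha.monotone h1i)
          calc a 1 * (n+1) ≤ a 1 * ∑ i, α i := Nat.mul_le_mul_left _ hα
            _ = ∑ i, a 1 * α i := by rw [Finset.mul_sum]
            _ ≤ s := Finset.sum_le_sum fun i _ => step i
        have hF1 : F = q * (a 1 - a 0) + τ + a 0 := by
          have h' : a 0 ≤ F := (h01.trans hFa2).le
          have := Nat.sub_add_cancel h'
          omega
        have key : F + n * a 0 < s := by
          set d := a 1 - a 0 with hdd
          have hd : a 1 = a 0 + d := by omega
          have h2 : q * d ≤ n * d := Nat.mul_le_mul_right _ hn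
          have e1 : a 1 * (n+1) = a 0 * n + a 0 + n * d + d := by rw [hd]; ring
          have e2 : n * a 0 = a 0 * n := by ring
          omega
        set p := n * a 0 with hp
        have hpa : p = a 0 * n := by rw [hp]; ring
        set m := s - p with hm
        have hmp : m + p = s := by omega
        have hmF : F < m := by omega
        have hmS : m ∈ Sn a 1 := by
          by_contra hc
          exact absurd (hF.2 hc) (by omega)
        rcases hmS with hm0 | ⟨β, hβ1, hβ2⟩
        · simp only [Set.mem_singleton_iff] at hm0; omega
        · have hβsplit := aux_split β
          have hbsplit := aux_split (fun i => a i * β i)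
          set γ := Function.update β 0 (β 0 + (n - 1)) with hγ
          have hdeg : n ≤ ∑ i, γ i := by
            rw [hγ, aux_sum_update']
            omega
          have hmul : a 0 * (β 0 + (n - 1)) = a 0 * β 0 + a 0 * (n - 1) := by ring
          have hmul2 : a 0 * (n - 1) + a 0 = a 0 * n := by
            have h' : n - 1 + 1 = n := Nat.succ_pred_eq_of_pos hn1
            calc a 0 * (n - 1) + a 0 = a 0 * ((n - 1) + 1) := by ring
              _ = a 0 * n := by rw [h']
          have hval : ∑ i, a i * γ i = m + a 0 * (n - 1) := by
            rw [hγ, aux_sum_update]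
            omega
          refine ⟨∑ i, a i * γ i, ⟨Or.inr ⟨γ, hdeg, rfl⟩, ?_⟩, ?_⟩
          · rw [hval]; omega
          · show (∑ i, a i * γ i) + a 0 = s
            rw [hval]
            omega
  · rintro (⟨y, ⟨hy, hy0⟩, rfl⟩ | rfl)
    · rcases hy with h0 | ⟨β, hβ1, rfl⟩
      · exact absurd h0 hy0
      · right
        have hβsplit := aux_split β
        have hbsplit := aux_split (fun i => a i * β i)
        refine ⟨Function.update β 0 (β 0 + 1), ?_, ?_⟩
        · rw [aux_sum_update']
          omega
        · rw [aux_sum_update]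
          have hmul : a 0 * (β 0 + 1) = a 0 * β 0 + a 0 := by ring
          omega
    · left; rfl
end

section
/- Let S = ⟨a₁,...,a_r⟩ with a₁ < a₂ < F(S) and q defined by F(S) - a₁ = q(a₂ - a₁) + τ, 0 ≤ τ < a₂ - a₁. Then for every n ≥ q, the cardinality of S⁽ⁿ⁾ \ S⁽ⁿ⁺¹⁾ equals a₁. Hence the multiplicity of the toric curve X_A at the origin equals a₁ and its regularity index is at most q. -/
lemma Sn_zero {r n} (a : Fin r → ℕ) : 0 ∈ Sn a n := Or.inl rfl

lemma Sn_anti {r} (a : Fin r → ℕ) {m n : ℕ} (h : m ≤ n) : Sn a n ⊆ Sn a m := by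
  rintro x (hx | ⟨α, hα, rfl⟩)
  · exact Or.inl hx
  · exact Or.inr ⟨α, le_trans h hα, rfl⟩

lemma Sn_rep {r n} {a : Fin r → ℕ} {x : ℕ} (hx : x ∈ Sn a n) (hx0 : x ≠ 0) :
    ∃ α : Fin r → ℕ, n ≤ ∑ i, α i ∧ x = ∑ i, a i * α i := by
  rcases hx with hx | hx
  · exact absurd hx hx0
  · exact hx

lemma sum_single_aux {r : ℕ} (a : Fin (r + 2) → ℕ) (β : Fin (r + 2) → ℕ) :
    (∑ i, (β + (Pi.single 0 1 : Fin (r+2) → ℕ)) i = (∑ i, β i) + 1) ∧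
    (∑ i, a i * (β + (Pi.single 0 1 : Fin (r+2) → ℕ)) i = (∑ i, a i * β i) + a 0) := by
  constructor
  · simp [Finset.sum_add_distrib, Finset.sum_pi_single']
  · have h1 : ∀ i, a i * (β + (Pi.single 0 1 : Fin (r+2) → ℕ)) i
        = a i * β i + a i * (Pi.single 0 1 : Fin (r+2) → ℕ) i := by
      intro i; simp [mul_add]
    rw [Finset.sum_congr rfl fun i _ => h1 i, Finset.sum_add_distrib]
    congr 1
    have h2 : ∀ i : Fin (r+2), a i * (Pi.single 0 1 : Fin (r+2) → ℕ) i
        = (Pi.single 0 (a 0) : Fin (r+2) → ℕ) i := by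
      intro i
      by_cases h : i = 0 <;> simp [h, Pi.single_apply]
    rw [Finset.sum_congr rfl fun i _ => h2 i, Finset.sum_pi_single']
    simp

lemma Sn_lb {r n} {a : Fin (r + 2) → ℕ} (ha : StrictMono a) {x : ℕ}
    (hx : x ∈ Sn a n) (hx0 : x ≠ 0) : n * a 0 ≤ x := by
  obtain ⟨α, hα, rfl⟩ := Sn_rep hx hx0
  calc n * a 0 ≤ (∑ i, α i) * a 0 := Nat.mul_le_mul_right _ hα
    _ = ∑ i, a 0 * α i := by rw [Finset.sum_mul]; exact Finset.sum_congr rfl fun i _ => mul_comm _ _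
    _ ≤ ∑ i, a i * α i :=
      Finset.sum_le_sum fun i _ => Nat.mul_le_mul_right _ (ha.monotone (Fin.zero_le i))

lemma Sn_add_a0 {r n} {a : Fin (r + 2) → ℕ} {x : ℕ}
    (hx : x ∈ Sn a n) (hx0 : x ≠ 0) : x + a 0 ∈ Sn a (n + 1) := by
  obtain ⟨α, hα, rfl⟩ := Sn_rep hx hx0
  obtain ⟨h1, h2⟩ := sum_single_aux a α
  exact Or.inr ⟨α + (Pi.single 0 1 : Fin (r+2) → ℕ), by omega, h2.symm⟩

lemma Sn_add_mul {r n} {a : Fin (r + 2) → ℕ} {x : ℕ}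
    (hx : x ∈ Sn a n) (hx0 : x ≠ 0) (k : ℕ) : x + k * a 0 ∈ Sn a (n + k) := by
  induction k with
  | zero => simpa using hx
  | succ j ih =>
    have : x + (j + 1) * a 0 = (x + j * a 0) + a 0 := by ring
    rw [this]
    exact Sn_add_a0 ih (fun h => hx0 (by
      rcases Nat.add_eq_zero.mp h with ⟨h1, _⟩; exact h1))

lemma Sn_key {r : ℕ} {a : Fin (r + 2) → ℕ} (ha : StrictMono a) (h1 : 1 < a 0)
    (F q τ : ℕ) (hgt : ∀ m, F < m → m ∈ Sn a 1) (hτ : τ < a 1 - a 0)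
    (hFeq : F = q * (a 1 - a 0) + τ + a 0)
    {m x : ℕ} (hm : q ≤ m) (hm1 : 1 ≤ m) (hx : x ∈ Sn a (m + 1)) (hx0 : x ≠ 0) :
    ∃ y, x = y + a 0 ∧ y ∈ Sn a m := by
  obtain ⟨α, hα, hxeq⟩ := Sn_rep hx hx0
  by_cases h0 : α 0 = 0
  · -- every generator used is ≥ a 1
    have hx1 : (m + 1) * a 1 ≤ x := by
      have step : ∀ i ∈ Finset.univ, a 1 * α i ≤ a i * α i := by
        intro i _
        by_cases h : i = 0
        · subst h; simp [h0]
        · refine Nat.mul_le_mul_right _ (ha.monotone ?_)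
          have hv : (i : ℕ) ≠ 0 := fun hv => h (Fin.ext (by simpa using hv))
          rw [Fin.le_def]
          simpa using Nat.one_le_iff_ne_zero.mpr hv
      calc (m + 1) * a 1 ≤ (∑ i, α i) * a 1 := Nat.mul_le_mul_right _ hα
        _ = ∑ i, a 1 * α i := by
            rw [Finset.sum_mul]; exact Finset.sum_congr rfl fun i _ => mul_comm _ _
        _ ≤ ∑ i, a i * α i := Finset.sum_le_sum step
        _ = x := hxeq.symm
    have hd : a 0 < a 1 := ha (by rw [Fin.lt_def]; simp)
    obtain ⟨d, hd2⟩ : ∃ d, a 1 = a 0 + d := ⟨a 1 - a 0, by omega⟩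
    have had : a 1 - a 0 = d := by omega
    rw [had] at hτ hFeq
    have hE : (m + 1) * a 1 = m * a 0 + a 0 + (m * d + d) := by rw [hd2]; ring
    have hAB : q * d ≤ m * d := Nat.mul_le_mul_right _ hm
    have big : F + m * a 0 < x := by
      rw [hFeq]
      have : q * d + τ + a 0 + m * a 0 < (m + 1) * a 1 := by rw [hE]; omega
      omega
    have hle : m * a 0 ≤ x := by omega
    have hxw : (x - m * a 0) + m * a 0 = x := Nat.sub_add_cancel hle
    set w := x - m * a 0 with hwdef
    have hwF : F < w := by omega
    have hw0 : w ≠ 0 := by omega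
    have hmem : w + (m - 1) * a 0 ∈ Sn a (1 + (m - 1)) := Sn_add_mul (hgt w hwF) hw0 (m - 1)
    have hmm : 1 + (m - 1) = m := by omega
    rw [hmm] at hmem
    refine ⟨w + (m - 1) * a 0, ?_, hmem⟩
    have hsucc : (m - 1) * a 0 + a 0 = m * a 0 := by
      have h' : m - 1 + 1 = m := by omega
      calc (m - 1) * a 0 + a 0 = (m - 1 + 1) * a 0 := by ring
        _ = m * a 0 := by rw [h']
    omega
  · set β := fun i => α i - (Pi.single 0 1 : Fin (r + 2) → ℕ) i with hβ
    have hαβ : α = β + (Pi.single 0 1 : Fin (r + 2) → ℕ) := by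
      funext i
      by_cases h : i = 0
      · subst h; simp [hβ]; omega
      · simp [hβ, Pi.single_apply, h]
    obtain ⟨s1, s2⟩ := sum_single_aux a β
    rw [hαβ] at hα hxeq
    exact ⟨∑ i, a i * β i, by rw [hxeq, s2], Or.inr ⟨β, by omega, rfl⟩⟩

theorem stmt_9 (r : ℕ) (a : Fin (r + 2) → ℕ)
    (ha : StrictMono a) (h1 : 1 < a 0)
    (hgcd : Finset.univ.gcd a = 1)
    (hmin : ∀ i, a i ∉ AddSubmonoid.closure (a '' {i}ᶜ))
    (F : ℕ) (hF : IsGreatest {m : ℕ | m ∉ Sn a 1} F) (hFa2 : a 1 < F)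
    (q τ : ℕ) (hq : 1 ≤ q) (hτ : τ < a 1 - a 0)
    (hdecomp : F - a 0 = q * (a 1 - a 0) + τ)
    (n : ℕ) (hn : q ≤ n) :
    (Sn a n \ Sn a (n + 1)).ncard = a 0 := by
  classical
  have hd : a 0 < a 1 := ha (by rw [Fin.lt_def]; simp)
  have ha0pos : 0 < a 0 := by omega
  have haF : a 0 < F := by omega
  have hgt : ∀ m, F < m → m ∈ Sn a 1 := by
    intro m hm
    by_contra h
    exact absurd (hF.2 h) (by omega)
  have hFeq : F = q * (a 1 - a 0) + τ + a 0 := by omega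
  have hn1 : 1 ≤ n := le_trans hq hn
  set T := Sn a n \ Sn a (n + 1) with hT
  -- x % a 0 is injective on T
  have main : ∀ x ∈ T, ∀ y ∈ T, x ≤ y → x % a 0 = y % a 0 → x = y := by
    intro x hx y hy hxy hmod
    have hx0 : x ≠ 0 := fun h => hx.2 (h ▸ Sn_zero a)
    have hdvd : a 0 ∣ y - x := (Nat.modEq_iff_dvd' hxy).mp hmod
    obtain ⟨k, hk⟩ := hdvd
    have hy' : y = x + a 0 * k := by rw [← hk]; omega
    rcases Nat.eq_zero_or_pos k with hk0 | hk0
    · rw [hk0, mul_zero] at hy'; omega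
    · exfalso
      have hxk : x + k * a 0 ∈ Sn a (n + k) := Sn_add_mul hx.1 hx0 k
      have hmem : y ∈ Sn a (n + k) := by rw [hy', mul_comm]; exact hxk
      exact hy.2 (Sn_anti a (by omega) hmem)
  have hInj : Set.InjOn (· % a 0) T := by
    intro x hx y hy hmod
    rcases le_total x y with h | h
    · exact main x hx y hy h hmod
    · exact (main y hy x hx h hmod.symm).symm
  have hImg : (· % a 0) '' T = Set.Iio (a 0) := by
    apply Set.Subset.antisymm
    · rintro c ⟨x, _, rfl⟩
      exact Nat.mod_lt _ ha0pos
    · intro c hc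
      have hc' : c < a 0 := hc
      -- the class of c contains elements of Sn a n
      have hex : ∃ k, c + k * a 0 ∈ Sn a n ∧ c + k * a 0 ≠ 0 := by
        refine ⟨(F + 1) + (n - 1), ?_, ?_⟩
        · have hwF : F < c + (F + 1) * a 0 := by
            have : F + 1 ≤ (F + 1) * a 0 := Nat.le_mul_of_pos_right _ ha0pos
            omega
          have hw0 : c + (F + 1) * a 0 ≠ 0 := by omega
          have := Sn_add_mul (hgt _ hwF) hw0 (n - 1)
          have heq : c + ((F + 1) + (n - 1)) * a 0 = c + (F + 1) * a 0 + (n - 1) * a 0 := by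
            rw [Nat.add_mul]; omega
          have hnn : 1 + (n - 1) = n := by omega
          rw [hnn] at this
          rwa [heq]
        · have : F + 1 ≤ ((F + 1) + (n - 1)) * a 0 := by
            calc F + 1 ≤ (F + 1) + (n - 1) := by omega
              _ ≤ ((F + 1) + (n - 1)) * a 0 := Nat.le_mul_of_pos_right _ ha0pos
          omega
      set k₀ := Nat.find hex with hk₀
      obtain ⟨hxin, hxne⟩ := Nat.find_spec hex
      refine ⟨c + k₀ * a 0, ⟨hxin, ?_⟩, ?_⟩
      · -- not in Sn a (n+1)
        intro hmem
        obtain ⟨y, hxy, hySn⟩ := Sn_key ha h1 F q τ hgt hτ hFeq hn hn1 hmem hxne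
        have hy0 : y ≠ 0 := by
          intro h0
          subst h0
          have hlb : (n + 1) * a 0 ≤ c + k₀ * a 0 := Sn_lb ha hmem hxne
          have h2a : 2 * a 0 ≤ (n + 1) * a 0 := Nat.mul_le_mul_right _ (by omega)
          omega
        have hk₀1 : 1 ≤ k₀ := by
          rcases Nat.eq_zero_or_pos k₀ with h | h
          · exfalso; rw [h] at hxy; simp at hxy; omega
          · exact h
        have hsucc : k₀ * a 0 = (k₀ - 1) * a 0 + a 0 := by
          have h' : k₀ - 1 + 1 = k₀ := by omega
          calc k₀ * a 0 = (k₀ - 1 + 1) * a 0 := by rw [h']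
            _ = (k₀ - 1) * a 0 + a 0 := by ring
        have hyeq : y = c + (k₀ - 1) * a 0 := by omega
        have := Nat.find_min hex (show k₀ - 1 < k₀ by omega)
        exact this ⟨by rwa [← hyeq], by rwa [← hyeq]⟩
      · simp only [Nat.add_mul_mod_self_right]
        exact Nat.mod_eq_of_lt hc'
  calc T.ncard = ((· % a 0) '' T).ncard := (Set.ncard_image_of_injOn hInj).symm
    _ = (Set.Iio (a 0)).ncard := by rw [hImg]
    _ = a 0 := by rw [← Finset.coe_Iio, Set.ncard_coe_finset, Nat.card_Iio]
end

section
/- Let a₁ ≥ 3 and S = ⟨a₁, 2a₁+1, 2a₁+2, ..., 2a₁+(a₁-2)⟩. Then the Frobenius number of S is 4a₁ - 1. -/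
/-!
Modulo `a`, the least element of `S` in the residue class `r` is `0` for `r = 0` and the
generator `2a + r` for `1 ≤ r ≤ a - 2`. The class `a - 1` contains no generator, so reaching it
takes two generators of nonzero residue, and its least element is `(2a + 1) + (3a - 2) = 5a - 1`.
As `S` is closed under adding `a`, its largest gap is the largest of these least elements minus
`a`, that is `4a - 1`.
-/

theorem AddSubmonoid.mem_of_le_of_mod_eq {S : AddSubmonoid ℕ} {a x m : ℕ} (ha : a ∈ S)
    (hx : x ∈ S) (hle : x ≤ m) (hmod : x % a = m % a) : m ∈ S := by
  obtain ⟨k, hk⟩ := Nat.dvd_of_mod_eq_zero (Nat.sub_mod_eq_zero_of_mod_eq hmod.symm)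
  have hm : m = x + k • a := by rw [smul_eq_mul]; grind
  exact hm ▸ S.add_mem hx (S.nsmul_mem ha k)

theorem Nat.add_mod_le_of_mul_le {a k m : ℕ} (h : k * a ≤ m) : k * a + m % a ≤ m := by
  rcases Nat.eq_zero_or_pos a with rfl | ha
  · simp
  have hk : k ≤ m / a := (Nat.le_div_iff_mul_le ha).2 h
  have := Nat.div_add_mod' m a
  nlinarith

namespace ShiftedIntervalSemigroup

def gens (a : ℕ) : Set ℕ :=
  {a} ∪ {x : ℕ | ∃ i : ℕ, 1 ≤ i ∧ i ≤ a - 2 ∧ x = 2 * a + i}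

variable {a : ℕ}

-- The first conjunct is what carries the second through sums.
theorem mem_closure_gens_lower_bound (ha : 2 ≤ a) {n : ℕ}
    (hn : n ∈ AddSubmonoid.closure (gens a)) :
    (n % a ≠ 0 → 2 * a + n % a ≤ n) ∧ (n % a = a - 1 → 5 * a - 1 ≤ n) := by
  induction hn using AddSubmonoid.closure_induction with
  | mem x hx =>
    rcases hx with rfl | ⟨i, hi1, hi2, rfl⟩
    · simp only [Nat.mod_self]
      omega
    · rw [Nat.mul_add_mod_of_lt (by omega)]
      omega
  | zero => simp only [Nat.zero_mod]; omega
  | add m n _ _ ihm ihn =>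
    have := Nat.mod_lt m (show 0 < a by omega)
    have := Nat.mod_lt n (show 0 < a by omega)
    rw [Nat.add_mod_eq_ite]
    split_ifs <;> omega

theorem four_mul_sub_one_not_mem (ha : 2 ≤ a) :
    4 * a - 1 ∉ AddSubmonoid.closure (gens a) := fun hmem => by
  have hmod : (4 * a - 1) % a = a - 1 := by
    rw [show 4 * a - 1 = 3 * a + (a - 1) by omega, Nat.mul_add_mod_of_lt (by omega)]
  have := (mem_closure_gens_lower_bound ha hmem).2 hmod
  omega

theorem exists_mem_mod_eq_le (ha : 3 ≤ a) {r : ℕ} (hr : r < a) :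
    ∃ x ∈ AddSubmonoid.closure (gens a), x % a = r ∧ x ≤ 4 * a + r := by
  have hgen : ∀ i, 1 ≤ i → i ≤ a - 2 → 2 * a + i ∈ AddSubmonoid.closure (gens a) :=
    fun i h1 h2 => AddSubmonoid.subset_closure (.inr ⟨i, h1, h2, rfl⟩)
  rcases Nat.eq_zero_or_pos r with rfl | hr0
  · exact ⟨0, zero_mem _, Nat.zero_mod a, Nat.zero_le _⟩
  rcases Nat.lt_or_ge r (a - 1) with hr1 | hr1
  · exact ⟨2 * a + r, hgen r hr0 (by omega), Nat.mul_add_mod_of_lt hr, by omega⟩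
  · refine ⟨(2 * a + 1) + (2 * a + (a - 2)),
      add_mem (hgen 1 le_rfl (by omega)) (hgen (a - 2) (by omega) le_rfl), ?_, by omega⟩
    rw [show 2 * a + 1 + (2 * a + (a - 2)) = 4 * a + r by omega, Nat.mul_add_mod_of_lt hr]

theorem mem_closure_gens_of_le (ha : 3 ≤ a) {m : ℕ} (hm : 4 * a ≤ m) :
    m ∈ AddSubmonoid.closure (gens a) := by
  obtain ⟨x, hx, hxr, hxle⟩ := exists_mem_mod_eq_le ha (Nat.mod_lt m (by omega))
  exact AddSubmonoid.mem_of_le_of_mod_eq (AddSubmonoid.subset_closure (.inl rfl)) hx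
    (hxle.trans (Nat.add_mod_le_of_mul_le hm)) hxr

end ShiftedIntervalSemigroup

open ShiftedIntervalSemigroup in
theorem stmt_11 (a₁ : ℕ) (h : 3 ≤ a₁) :
    IsGreatest
      {m : ℕ | m ∉ AddSubmonoid.closure
        ({a₁} ∪ {x : ℕ | ∃ i : ℕ, 1 ≤ i ∧ i ≤ a₁ - 2 ∧ x = 2 * a₁ + i})}
      (4 * a₁ - 1) :=
  ⟨four_mul_sub_one_not_mem (by omega), fun _ hm =>
    not_lt.1 fun hlt => hm (mem_closure_gens_of_le h (by omega))⟩
end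

section
/- Let a₁ ≥ 3 and S = ⟨a₁, 2a₁+1, ..., 2a₁+(a₁-2)⟩. Then |S⁽¹⁾ \ S⁽²⁾| = a₁ - 1 < a₁, while |S⁽ⁿ⁾ \ S⁽ⁿ⁺¹⁾| = a₁ for all n ≥ 2. In particular the regularity index of the corresponding toric curve at the origin equals 2. -/
/-- The generators `a₁, 2a₁+1, 2a₁+2, …, 2a₁+(a₁-2)` of the example. -/
def gen (a₁ : ℕ) : Fin (a₁ - 1) → ℕ :=
  fun i => if i.val = 0 then a₁ else 2 * a₁ + i.val

namespace Stmt12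

lemma mem_Sn_iff {r n s : ℕ} {a : Fin r → ℕ} :
    s ∈ Sn a n ↔ s = 0 ∨ ∃ α : Fin r → ℕ, n ≤ ∑ i, α i ∧ s = ∑ i, a i * α i := by
  simp [Sn]

lemma sum_mul_single {m : ℕ} (f : Fin m → ℕ) (j : Fin m) (x : ℕ) :
    ∑ i, f i * (Pi.single j x : Fin m → ℕ) i = f j * x := by
  simp [Pi.single_apply, mul_ite, Finset.sum_ite_eq']

lemma sum_single {m : ℕ} (j : Fin m) (x : ℕ) :
    ∑ i, (Pi.single j x : Fin m → ℕ) i = x := by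
  simp [Pi.single_apply, Finset.sum_ite_eq']

lemma msplit (A a b c : ℕ) (h : a = b + c) : A * a = A * b + A * c := by
  rw [h, Nat.mul_add]

variable {A : ℕ}

/-- construction: `A*x` at any level `≤ x`. -/
lemma c1 (hA : 3 ≤ A) (x n : ℕ) (hn : n ≤ x) : A * x ∈ Sn (gen A) n := by
  refine mem_Sn_iff.mpr (Or.inr ⟨Pi.single ⟨0, by omega⟩ x, ?_, ?_⟩)
  · rw [sum_single]; exact hn
  · rw [sum_mul_single]; simp [gen]

/-- construction: `A*x + (2A+ρ)` at any level `≤ x+1`. -/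
lemma c2 (hA : 3 ≤ A) (x ρ n : ℕ) (h1 : 1 ≤ ρ) (h2 : ρ ≤ A - 2) (hn : n ≤ x + 1) :
    A * x + (2 * A + ρ) ∈ Sn (gen A) n := by
  have hρ : ρ < A - 1 := by omega
  have hρ0 : ρ ≠ 0 := by omega
  refine mem_Sn_iff.mpr (Or.inr
    ⟨(Pi.single ⟨0, by omega⟩ x : Fin (A-1) → ℕ) + Pi.single ⟨ρ, hρ⟩ 1, ?_, ?_⟩)
  · simp only [Pi.add_apply, Finset.sum_add_distrib, sum_single]; exact hn
  · simp only [Pi.add_apply, mul_add, Finset.sum_add_distrib, sum_mul_single, mul_one]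
    simp [gen, hρ0]

/-- construction: `A*x + (5A-1)` at any level `≤ x+2`. -/
lemma c3 (hA : 3 ≤ A) (x n : ℕ) (hn : n ≤ x + 2) :
    A * x + (5 * A - 1) ∈ Sn (gen A) n := by
  have hρ : A - 2 < A - 1 := by omega
  have hρ0 : A - 2 ≠ 0 := by omega
  refine mem_Sn_iff.mpr (Or.inr
    ⟨(Pi.single ⟨0, by omega⟩ x : Fin (A-1) → ℕ) + Pi.single ⟨1, by omega⟩ 1
      + Pi.single ⟨A - 2, hρ⟩ 1, ?_, ?_⟩)
  · simp only [Pi.add_apply, Finset.sum_add_distrib, sum_single]; exact hn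
  · simp only [Pi.add_apply, mul_add, Finset.sum_add_distrib, sum_mul_single, mul_one]
    simp only [gen, hρ0, if_neg, if_pos]
    norm_num
    omega

/-- decomposition of an arbitrary representation. -/
lemma decomp (hA : 3 ≤ A) (α : Fin (A - 1) → ℕ) :
    ∃ k t : ℕ, (∑ i, gen A i * α i) = A * (∑ i, α i) + A * k + t ∧
      k ≤ ∑ i, α i ∧ k ≤ t ∧ t ≤ (A - 2) * k := by
  refine ⟨∑ i, (if i.val = 0 then 0 else α i), ∑ i, i.val * α i, ?_, ?_, ?_, ?_⟩
  · rw [Finset.mul_sum, Finset.mul_sum, ← Finset.sum_add_distrib, ← Finset.sum_add_distrib]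
    refine Finset.sum_congr rfl fun i _ => ?_
    simp only [gen]
    by_cases hi : i.val = 0
    · simp [hi]
    · rw [if_neg hi, if_neg hi]; ring
  · exact Finset.sum_le_sum fun i _ => by split <;> omega
  · refine Finset.sum_le_sum fun i _ => ?_
    by_cases hi : i.val = 0
    · simp [hi]
    · rw [if_neg hi]
      exact Nat.le_mul_of_pos_left _ (by omega)
  · rw [Finset.mul_sum]
    refine Finset.sum_le_sum fun i _ => ?_
    by_cases hi : i.val = 0
    · simp [hi]
    · rw [if_neg hi]
      have hlt := i.isLt
      exact Nat.mul_le_mul_right _ (by omega : i.val ≤ A - 2)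

/-- `A*n` is not in `S^(n+1)`. -/
lemma nm1 (hA : 3 ≤ A) (n : ℕ) (hn : 1 ≤ n) : A * n ∉ Sn (gen A) (n + 1) := by
  intro hmem
  rcases mem_Sn_iff.mp hmem with h0 | ⟨α, hm, hs⟩
  · have : 0 < A * n := Nat.mul_pos (by omega) (by omega)
    omega
  · obtain ⟨k, t, heq, hk, hkt, htk⟩ := decomp hA α
    rw [heq] at hs
    have h1 : A * (n + 1) ≤ A * (∑ i, α i) := Nat.mul_le_mul_left A hm
    have h2 : A * (n + 1) = A * n + A := by ring
    omega

/-- `A*(n+1)+ρ` is not in `S^(n+1)` for `1 ≤ ρ ≤ A-2`. -/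
lemma nm2 (hA : 3 ≤ A) (n ρ : ℕ) (h1 : 1 ≤ ρ) (h2 : ρ ≤ A - 2) :
    A * (n + 1) + ρ ∉ Sn (gen A) (n + 1) := by
  intro hmem
  rcases mem_Sn_iff.mp hmem with h0 | ⟨α, hm, hs⟩
  · omega
  · obtain ⟨k, t, heq, hk, hkt, htk⟩ := decomp hA α
    rw [heq] at hs
    obtain ⟨m, hmeq⟩ : ∃ m, ∑ i, α i = m := ⟨_, rfl⟩
    rw [hmeq] at hm hs hk
    have h3 : A * (n + 1) ≤ A * m := Nat.mul_le_mul_left A hm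
    rcases Nat.eq_zero_or_pos k with hk0 | hk1
    · subst hk0
      have ht0 : t = 0 := by omega
      rcases Nat.lt_or_ge m (n + 2) with hm2 | hm2
      · have hmeq2 : m = n + 1 := by omega
        have hb : A * m = A * (n + 1) := by rw [hmeq2]
        omega
      · have h4 : A * (n + 2) ≤ A * m := Nat.mul_le_mul_left A hm2
        have h5 : A * (n + 2) = A * (n + 1) + A := by ring
        omega
    · have h4 : A * (n + 2) ≤ A * (m + k) := Nat.mul_le_mul_left A (by omega)
      have h5 : A * (n + 2) = A * (n + 1) + A := by ring
      have h6 : A * (m + k) = A * m + A * k := by ring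
      omega

/-- `A*(n+2) + (A-1)` is not in `S^(n+1)`. -/
lemma nm3 (hA : 3 ≤ A) (n : ℕ) : A * (n + 2) + (A - 1) ∉ Sn (gen A) (n + 1) := by
  intro hmem
  rcases mem_Sn_iff.mp hmem with h0 | ⟨α, hm, hs⟩
  · omega
  · obtain ⟨k, t, heq, hk, hkt, htk⟩ := decomp hA α
    rw [heq] at hs
    obtain ⟨m, hmeq⟩ : ∃ m, ∑ i, α i = m := ⟨_, rfl⟩
    rw [hmeq] at hm hs hk
    have h3 : A * (n + 1) ≤ A * m := Nat.mul_le_mul_left A hm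
    rcases Nat.lt_or_ge (m + k) (n + 3) with hmk | hmk
    · rcases Nat.eq_zero_or_pos k with hk0 | hkpos
      · subst hk0
        have ht0 : t = 0 := by omega
        rcases Nat.lt_or_ge m (n + 3) with hm3 | hm3
        · have h4 : A * m ≤ A * (n + 2) := Nat.mul_le_mul_left A (by omega)
          omega
        · have h4 : A * (n + 3) ≤ A * m := Nat.mul_le_mul_left A hm3
          have h5 : A * (n + 3) = A * (n + 2) + A := by ring
          omega
      · have hkeq : k = 1 := by omega
        subst hkeq
        have hmeq2 : m = n + 1 := by omega
        have hb : A * m = A * (n + 1) := by rw [hmeq2]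
        have h5 : A * (n + 2) = A * (n + 1) + A := by ring
        omega
    · have h4 : A * (n + 3) ≤ A * (m + k) := Nat.mul_le_mul_left A hmk
      have h5 : A * (n + 3) = A * (n + 2) + A := by ring
      have h6 : A * (m + k) = A * m + A * k := by ring
      omega

/-- Forward classification. -/
lemma fwd (hA : 3 ≤ A) (n : ℕ) (hn : 1 ≤ n) (s : ℕ)
    (hs : s ∈ Sn (gen A) n) (hs' : s ∉ Sn (gen A) (n + 1)) :
    s = A * n ∨ (∃ ρ, 1 ≤ ρ ∧ ρ ≤ A - 2 ∧ s = A * (n + 1) + ρ) ∨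
      (2 ≤ n ∧ s = A * (n + 2) + (A - 1)) := by
  rcases mem_Sn_iff.mp hs with h0 | ⟨α, hm, hval⟩
  · exact absurd (mem_Sn_iff.mpr (Or.inl h0)) hs'
  by_cases hmn : n + 1 ≤ ∑ i, α i
  · exact absurd (mem_Sn_iff.mpr (Or.inr ⟨α, hmn, hval⟩)) hs'
  obtain ⟨k, t, heq, hk, hkt, htk⟩ := decomp hA α
  have hsum : ∑ i, α i = n := by omega
  rw [hsum] at heq hk
  rw [heq] at hval
  rcases Nat.eq_zero_or_pos k with hk0 | hkpos
  · subst hk0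
    left
    have hb : A * 0 = 0 := by ring
    omega
  · have ht1 : 1 ≤ t := by omega
    obtain ⟨q, ρ, htqr, hρA⟩ : ∃ q ρ, t = A * q + ρ ∧ ρ < A :=
      ⟨t / A, t % A, (Nat.div_add_mod t A).symm, Nat.mod_lt _ (by omega)⟩
    rcases Nat.eq_zero_or_pos ρ with hρ0 | hρpos
    · subst hρ0
      exfalso
      rcases Nat.eq_zero_or_pos q with hq0 | hq1
      · subst hq0; omega
      have hsval : s = A * (n + k + q) := by
        have h1 : A * (n + k + q) = A * n + A * k + A * q := by ring
        omega
      rw [hsval] at hs'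
      exact hs' (c1 hA _ _ (by omega))
    · rcases Nat.lt_or_ge ρ (A - 1) with hρsmall | hρbig
      · -- 1 ≤ ρ ≤ A - 2
        have h1 : A * (n + k + q) = A * n + A * k + A * q := by ring
        have h2 : A * (n + k + q) = A * (n + k + q - 2) + A * 2 :=
          msplit A _ _ 2 (by omega)
        rcases Nat.lt_or_ge (k + q) 2 with hsmall | hbig
        · right; left
          have hk1 : k = 1 := by omega
          have hq0 : q = 0 := by omega
          subst hk1; subst hq0
          have hh : A * (n + 1) = A * n + A * 1 := by ring
          exact ⟨ρ, hρpos, by omega, by omega⟩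
        · exfalso
          have hsval : s = A * (n + k + q - 2) + (2 * A + ρ) := by omega
          rw [hsval] at hs'
          exact hs' (c2 hA _ _ _ hρpos (by omega) (by omega))
      · have hρeq : ρ = A - 1 := by omega
        have hkq : q + 2 ≤ k := by
          by_contra hcon
          push_neg at hcon
          have h1 : (A - 2) * k ≤ (A - 2) * (q + 1) := Nat.mul_le_mul_left _ (show k ≤ q + 1 by omega)
          have h2 : (A - 2) * (q + 1) + 2 * (q + 1) = A * (q + 1) := by
            have h2' : A - 2 + 2 = A := by omega
            calc (A - 2) * (q + 1) + 2 * (q + 1) = (A - 2 + 2) * (q + 1) := by ring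
              _ = A * (q + 1) := by rw [h2']
          have h3 : A * (q + 1) = A * q + A := by ring
          omega
        rcases Nat.lt_or_ge (k + q) 3 with hsmall | hbig
        · right; right
          have hkeq : k = 2 := by omega
          have hqeq : q = 0 := by omega
          subst hkeq; subst hqeq
          have hh : A * (n + 2) = A * n + A * 2 := by ring
          exact ⟨by omega, by omega⟩
        · exfalso
          have h1 : A * (n + k + q) = A * n + A * k + A * q := by ring
          have h2 : A * (n + k + q + 1) = A * (n + k + q - 4) + A * 5 :=
            msplit A _ _ 5 (by omega)
          have h3 : A * (n + k + q + 1) = A * (n + k + q) + A * 1 := by ring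
          have hsval : s = A * (n + k + q - 4) + (5 * A - 1) := by omega
          rw [hsval] at hs'
          exact hs' (c3 hA _ _ (by omega))

/-- The difference set as an explicit finset, `n ≥ 2`. -/
lemma diff_eq (hA : 3 ≤ A) (n : ℕ) (hn : 2 ≤ n) :
    Sn (gen A) n \ Sn (gen A) (n + 1) =
      ↑(insert (A * n) (insert (A * (n + 2) + (A - 1))
        ((Finset.Icc 1 (A - 2)).image (fun ρ => A * (n + 1) + ρ)))) := by
  ext s
  simp only [Set.mem_diff, Finset.coe_insert, Set.mem_insert_iff, Finset.coe_image,
    Set.mem_image, Finset.mem_coe, Finset.mem_Icc]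
  constructor
  · rintro ⟨h1, h2⟩
    rcases fwd hA n (by omega) s h1 h2 with h | ⟨ρ, hρ1, hρ2, h⟩ | ⟨-, h⟩
    · exact Or.inl h
    · exact Or.inr (Or.inr ⟨ρ, ⟨hρ1, hρ2⟩, h.symm⟩)
    · exact Or.inr (Or.inl h)
  · rintro (h | h | ⟨ρ, ⟨hρ1, hρ2⟩, h⟩)
    · subst h
      exact ⟨c1 hA n n le_rfl, nm1 hA n (by omega)⟩
    · subst h
      refine ⟨?_, nm3 hA n⟩
      have h2 : A * (n + 2) = A * (n - 2) + A * 4 := msplit A _ _ 4 (by omega)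
      have h1 : A * (n + 2) + (A - 1) = A * (n - 2) + (5 * A - 1) := by omega
      rw [h1]
      exact c3 hA _ _ (by omega)
    · subst h
      refine ⟨?_, nm2 hA n ρ hρ1 hρ2⟩
      have h2 : A * (n + 1) = A * (n - 1) + A * 2 := msplit A _ _ 2 (by omega)
      have h1 : A * (n + 1) + ρ = A * (n - 1) + (2 * A + ρ) := by omega
      rw [h1]
      exact c2 hA _ _ _ hρ1 hρ2 (by omega)

/-- The difference set for n = 1. -/
lemma diff_eq_one (hA : 3 ≤ A) :
    Sn (gen A) 1 \ Sn (gen A) (1 + 1) =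
      ↑(insert (A * 1) ((Finset.Icc 1 (A - 2)).image (fun ρ => A * (1 + 1) + ρ))) := by
  ext s
  simp only [Set.mem_diff, Finset.coe_insert, Set.mem_insert_iff, Finset.coe_image,
    Set.mem_image, Finset.mem_coe, Finset.mem_Icc]
  constructor
  · rintro ⟨h1, h2⟩
    rcases fwd hA 1 le_rfl s h1 h2 with h | ⟨ρ, hρ1, hρ2, h⟩ | ⟨h, -⟩
    · exact Or.inl h
    · exact Or.inr ⟨ρ, ⟨hρ1, hρ2⟩, h.symm⟩
    · omega
  · rintro (h | ⟨ρ, ⟨hρ1, hρ2⟩, h⟩)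
    · subst h
      exact ⟨c1 hA 1 1 le_rfl, nm1 hA 1 le_rfl⟩
    · subst h
      refine ⟨?_, nm2 hA 1 ρ hρ1 hρ2⟩
      have h1 : A * (1 + 1) + ρ = A * 0 + (2 * A + ρ) := by ring
      rw [h1]
      exact c2 hA _ _ _ hρ1 hρ2 le_rfl

lemma card_big (hA : 3 ≤ A) (n : ℕ) :
    (insert (A * n) (insert (A * (n + 2) + (A - 1))
        ((Finset.Icc 1 (A - 2)).image (fun ρ => A * (n + 1) + ρ)))).card = A := by
  have e1 : A * (n + 1) = A * n + A := by ring
  have e2 : A * (n + 2) = A * n + 2 * A := by ring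
  have himg : ((Finset.Icc 1 (A - 2)).image (fun ρ => A * (n + 1) + ρ)).card = A - 2 := by
    rw [Finset.card_image_of_injOn (fun x _ y _ hxy => by omega), Nat.card_Icc]
    omega
  rw [Finset.card_insert_of_notMem, Finset.card_insert_of_notMem, himg]
  · omega
  · simp only [Finset.mem_image, Finset.mem_Icc]
    rintro ⟨ρ, ⟨hρ1, hρ2⟩, hc⟩
    omega
  · simp only [Finset.mem_insert, Finset.mem_image, Finset.mem_Icc]
    rintro (hc | ⟨ρ, ⟨hρ1, hρ2⟩, hc⟩) <;> omega

lemma card_one (hA : 3 ≤ A) :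
    (insert (A * 1) ((Finset.Icc 1 (A - 2)).image (fun ρ => A * (1 + 1) + ρ))).card = A - 1 := by
  have e1 : A * (1 + 1) = A * 1 + A := by ring
  have himg : ((Finset.Icc 1 (A - 2)).image (fun ρ => A * (1 + 1) + ρ)).card = A - 2 := by
    rw [Finset.card_image_of_injOn (fun x _ y _ hxy => by omega), Nat.card_Icc]
    omega
  rw [Finset.card_insert_of_notMem, himg]
  · omega
  · simp only [Finset.mem_image, Finset.mem_Icc]
    rintro ⟨ρ, ⟨hρ1, hρ2⟩, hc⟩
    omega

end Stmt12

theorem stmt_12 (a₁ : ℕ) (h : 3 ≤ a₁) :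
    (Sn (gen a₁) 1 \ Sn (gen a₁) 2).ncard = a₁ - 1 ∧
    a₁ - 1 < a₁ ∧
    (∀ n : ℕ, 2 ≤ n → (Sn (gen a₁) n \ Sn (gen a₁) (n + 1)).ncard = a₁) ∧
    IsLeast {k : ℕ | ∀ n : ℕ, k ≤ n →
      (Sn (gen a₁) n \ Sn (gen a₁) (n + 1)).ncard = a₁} 2 := by
  have key2 : ∀ n : ℕ, 2 ≤ n → (Sn (gen a₁) n \ Sn (gen a₁) (n + 1)).ncard = a₁ := by
    intro n hn
    rw [Stmt12.diff_eq h n hn, Set.ncard_coe_finset, Stmt12.card_big h]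
  have key1 : (Sn (gen a₁) 1 \ Sn (gen a₁) 2).ncard = a₁ - 1 := by
    rw [show (2 : ℕ) = 1 + 1 from rfl, Stmt12.diff_eq_one h, Set.ncard_coe_finset,
      Stmt12.card_one h]
  refine ⟨key1, by omega, key2, key2, ?_⟩
  intro k hk
  by_contra hcon
  push_neg at hcon
  have h1 : (Sn (gen a₁) 1 \ Sn (gen a₁) 2).ncard = a₁ := hk 1 (by omega)
  omega
end

section
/- Let S = ⟨a₁,...,a_r⟩ with a₂ < F(S). Then the regularity index of the toric curve X_A at the origin satisfies ri ≤ (a₁a_r - 2a₁ - a_r - τ)/(a₂ - a₁), where τ is the remainder of F(S) - a₁ modulo a₂ - a₁. -/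
lemma mem_Sn {r : ℕ} (a : Fin r → ℕ) (n x : ℕ) :
    x ∈ Sn a n ↔ x = 0 ∨ ∃ α : Fin r → ℕ, n ≤ ∑ i, α i ∧ x = ∑ i, a i * α i := by
  simp [Sn]

lemma sum_single_nat {r : ℕ} (i : Fin r) (c : ℕ) :
    (∑ k, (Pi.single i c : Fin r → ℕ) k) = c := by
  classical
  rw [Finset.sum_pi_single']
  simp

lemma sum_mul_single {r : ℕ} (a : Fin r → ℕ) (i : Fin r) (c : ℕ) :
    (∑ k, a k * (Pi.single i c : Fin r → ℕ) k) = a i * c := by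
  classical
  rw [Finset.sum_eq_single i]
  · simp
  · intro k _ hk
    simp [Pi.single_eq_of_ne hk]
  · intro h
    exact absurd (Finset.mem_univ i) h

lemma sum_add_single_w {r : ℕ} (α : Fin r → ℕ) (i : Fin r) (c : ℕ) :
    (∑ k, (α k + (Pi.single i c : Fin r → ℕ) k)) = (∑ k, α k) + c := by
  rw [Finset.sum_add_distrib, sum_single_nat]

lemma sum_add_single_v {r : ℕ} (a α : Fin r → ℕ) (i : Fin r) (c : ℕ) :
    (∑ k, a k * (α k + (Pi.single i c : Fin r → ℕ) k)) = (∑ k, a k * α k) + a i * c := by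
  simp only [mul_add]
  rw [Finset.sum_add_distrib, sum_mul_single]

open Finset in
lemma exists_small_rep {r d : ℕ} (a : Fin (r + 2) → ℕ) (hd : 0 < d)
    (hgcd : Finset.univ.gcd a = 1) (c : ZMod d) :
    ∃ α : Fin (r + 2) → ℕ, (∑ i, α i) ≤ d - 1 ∧ ((∑ i, a i * α i : ℕ) : ZMod d) = c := by
  haveI : NeZero d := ⟨hd.ne'⟩
  classical
  set step : Finset (ZMod d) → Finset (ZMod d) :=
    fun T => T ∪ Finset.univ.biUnion (fun i : Fin (r + 2) => T.image (· + ((a i : ZMod d)))) with hstepdef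
  have hsub : ∀ T, T ⊆ step T := fun T => Finset.subset_union_left
  have hstepmem : ∀ T (x : ZMod d), x ∈ T → ∀ i, x + (a i : ZMod d) ∈ step T := by
    intro T x hx i
    exact Finset.mem_union_right _
      (Finset.mem_biUnion.2 ⟨i, Finset.mem_univ i, Finset.mem_image_of_mem _ hx⟩)
  have hstep_subset : ∀ T (x : ZMod d), x ∈ step T →
      x ∈ T ∨ ∃ i, ∃ y ∈ T, y + (a i : ZMod d) = x := by
    intro T x hx
    rcases Finset.mem_union.1 hx with h | h
    · exact Or.inl h
    · obtain ⟨i, _, hi⟩ := Finset.mem_biUnion.1 h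
      obtain ⟨y, hy, hyx⟩ := Finset.mem_image.1 hi
      exact Or.inr ⟨i, y, hy, hyx⟩
  set u : ℕ → Finset (ZMod d) := fun j => step^[j] {0} with hudef
  have hu0 : u 0 = {0} := rfl
  have husucc : ∀ j, u (j + 1) = step (u j) := fun j => Function.iterate_succ_apply' step j {0}
  have humono : ∀ j, u j ⊆ u (j + 1) := by
    intro j; rw [husucc]; exact hsub _
  have h0u : ∀ j, (0 : ZMod d) ∈ u j := by
    intro j
    induction j with
    | zero => simp [hu0]
    | succ j ih => exact humono j ih
  have growth : ∀ j, step (u j) = u j ∨ j + 1 ≤ (u j).card := by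
    intro j
    induction j with
    | zero => right; simp [hu0]
    | succ j ih =>
      rcases ih with h | h
      · left
        have e : u (j + 1) = u j := by rw [husucc, h]
        rw [e]; exact h
      · by_cases hc : step (u j) = u j
        · left
          have e : u (j + 1) = u j := by rw [husucc, hc]
          rw [e]; exact hc
        · right
          have hss : u j ⊂ u (j + 1) := by
            refine HasSubset.Subset.ssubset_of_ne (humono j) ?_
            rw [husucc]
            exact fun he => hc he.symm
          have := Finset.card_lt_card hss
          omega
  have hfixU : step (u (d - 1)) = u (d - 1) := by
    rcases growth (d - 1) with h | h
    · exact h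
    · have hcard : (u (d - 1)).card = Fintype.card (ZMod d) := by
        have h1 := Finset.card_le_univ (u (d - 1))
        have h2 : Fintype.card (ZMod d) = d := ZMod.card d
        omega
      have huniv : u (d - 1) = Finset.univ := Finset.eq_univ_of_card _ hcard
      rw [huniv]
      exact Finset.Subset.antisymm (Finset.subset_univ _) (hsub _)
  have hUadd : ∀ i (x : ZMod d), x ∈ u (d - 1) → x + (a i : ZMod d) ∈ u (d - 1) := by
    intro i x hx
    rw [← hfixU]
    exact hstepmem _ x hx i
  -- the subgroup H of translations preserving U
  have himage : ∀ x : ZMod d, (∀ t ∈ u (d-1), t + x ∈ u (d-1)) →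
      ∀ t ∈ u (d-1), t + (-x) ∈ u (d-1) := by
    intro x hx t ht
    have himg : (u (d-1)).image (· + x) = u (d-1) := by
      apply Finset.eq_of_subset_of_card_le
      · intro y hy
        obtain ⟨t', ht', rfl⟩ := Finset.mem_image.1 hy
        exact hx t' ht'
      · rw [Finset.card_image_of_injective _ (add_left_injective x)]
    rw [← himg] at ht
    obtain ⟨t', ht', htx⟩ := Finset.mem_image.1 ht
    have he : t + -x = t' := by rw [← htx]; ring
    rw [he]; exact ht'
  set H : AddSubgroup (ZMod d) :=
    { carrier := {x | ∀ t ∈ u (d-1), t + x ∈ u (d-1)}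
      zero_mem' := by intro t ht; simpa using ht
      add_mem' := by
        intro x y hx hy t ht
        rw [← add_assoc]
        exact hy _ (hx t ht)
      neg_mem' := by intro x hx; exact himage x hx } with hHdef
  have hHtop : ∀ x : ZMod d, x ∈ H := by
    set L := AddSubgroup.closure (Set.range fun i => ((a i : ZMod d))) with hLdef
    have h1 : (1 : ZMod d) ∈ L := by
      obtain ⟨g, hg⟩ := Int.subgroup_cyclic (AddSubgroup.comap (Int.castAddHom (ZMod d)) L)
      have hmemK : ∀ i, ((a i : ℤ)) ∈ AddSubgroup.comap (Int.castAddHom (ZMod d)) L := by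
        intro i
        simp only [AddSubgroup.mem_comap, Int.coe_castAddHom]
        have hcast : (((a i : ℤ)) : ZMod d) = ((a i : ZMod d)) := by push_cast; rfl
        rw [hcast]
        exact AddSubgroup.subset_closure ⟨i, rfl⟩
      have hdvd : ∀ i, g ∣ (a i : ℤ) := by
        intro i
        have hm := hmemK i
        rw [hg] at hm
        obtain ⟨m, hm'⟩ := AddSubgroup.mem_closure_singleton.1 hm
        exact ⟨m, by rw [← hm', zsmul_eq_mul, Int.cast_id, mul_comm]⟩
      have hna : g.natAbs ∣ 1 := by
        rw [← hgcd]
        refine Finset.dvd_gcd fun i _ => ?_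
        have := Int.natAbs_dvd_natAbs.2 (hdvd i)
        simpa using this
      have hg1 : g ∣ 1 := Int.natAbs_dvd.1 (by exact_mod_cast Int.natCast_dvd_natCast.2 hna)
      have h1K : (1 : ℤ) ∈ AddSubgroup.comap (Int.castAddHom (ZMod d)) L := by
        rw [hg]
        obtain ⟨m, hm⟩ := hg1
        exact AddSubgroup.mem_closure_singleton.2 ⟨m, by rw [zsmul_eq_mul, Int.cast_id, mul_comm, ← hm]⟩
      simpa using h1K
    have hcl : L ≤ H := by
      rw [hLdef]
      refine (AddSubgroup.closure_le H).2 ?_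
      rintro x ⟨i, rfl⟩
      exact fun t ht => hUadd i t ht
    intro x
    have hx1 : x ∈ L := by
      have hs := AddSubgroup.nsmul_mem L h1 x.val
      have : (x.val : ZMod d) = x := ZMod.natCast_rightInverse x
      rwa [nsmul_eq_mul, mul_one, this] at hs
    exact hcl hx1
  have hall : ∀ x : ZMod d, x ∈ u (d - 1) := by
    intro x
    have := hHtop x 0 (h0u (d-1))
    simpa using this
  have hrep : ∀ j, ∀ x ∈ u j, ∃ α : Fin (r + 2) → ℕ,
      (∑ i, α i) ≤ j ∧ ((∑ i, a i * α i : ℕ) : ZMod d) = x := by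
    intro j
    induction j with
    | zero =>
      intro x hx
      rw [hu0, Finset.mem_singleton] at hx
      exact ⟨0, by simp, by simp [hx.symm]⟩
    | succ j ih =>
      intro x hx
      rw [husucc] at hx
      rcases hstep_subset _ x hx with h | ⟨i, y, hy, rfl⟩
      · obtain ⟨α, h1, h2⟩ := ih x h
        exact ⟨α, by omega, h2⟩
      · obtain ⟨α, h1, h2⟩ := ih y hy
        refine ⟨α + Pi.single i 1, ?_, ?_⟩
        · have := sum_add_single_w α i 1
          simp only [Pi.add_apply] at *
          omega
        · have hv := sum_add_single_v a α i 1
          simp only [Pi.add_apply] at hv ⊢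
          rw [hv, Nat.cast_add, h2]
          push_cast
          ring
  exact hrep (d - 1) c (hall c)

lemma rep_add_single {r : ℕ} (a γ : Fin r → ℕ) (i : Fin r) (c : ℕ) :
    (∑ k, (γ + (Pi.single i c : Fin r → ℕ)) k) = (∑ k, γ k) + c ∧
    (∑ k, a k * (γ + (Pi.single i c : Fin r → ℕ)) k) = (∑ k, a k * γ k) + a i * c := by
  constructor
  · simp only [Pi.add_apply]; exact sum_add_single_w γ i c
  · simp only [Pi.add_apply]; exact sum_add_single_v a γ i c

lemma expand_aux (d A : ℕ) (h1 : 1 ≤ d) (h2 : 1 ≤ A) :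
    (d - 1) * (A - 1) + d + A = d * A + 1 := by
  obtain ⟨d', rfl⟩ := Nat.exists_eq_add_of_le h1
  obtain ⟨A', rfl⟩ := Nat.exists_eq_add_of_le h2
  have e1 : 1 + d' - 1 = d' := by omega
  have e2 : 1 + A' - 1 = A' := by omega
  rw [e1, e2]; ring

theorem stmt_13 (r : ℕ) (a : Fin (r + 2) → ℕ)
    (ha : StrictMono a) (h1 : 1 < a 0)
    (hgcd : Finset.univ.gcd a = 1)
    (hmin : ∀ i, a i ∉ AddSubmonoid.closure (a '' {i}ᶜ))
    (F : ℕ) (hF : IsGreatest {m : ℕ | m ∉ Sn a 1} F) (hFa2 : a 1 < F)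
    (τ : ℕ) (hτ : τ = (F - a 0) % (a 1 - a 0)) :
    sInf {k : ℕ | ∀ n : ℕ, k ≤ n → (Sn a n \ Sn a (n + 1)).ncard = a 0} ≤
      (a 0 * a (Fin.last (r + 1)) - 2 * a 0 - a (Fin.last (r + 1)) - τ)
        / (a 1 - a 0) := by
  classical
  have h01 : (0 : Fin (r + 2)) < 1 := by
    rw [Fin.lt_def]; simp [Fin.val_one]
  have h1last : (1 : Fin (r + 2)) ≤ Fin.last (r + 1) := by
    rw [Fin.le_def]; simp [Fin.val_one, Fin.val_last]
  set d := a 0 with hd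
  set A := a (Fin.last (r + 1)) with hA
  set b := a 1 - d with hb
  have hda1 : d < a 1 := ha h01
  have h1A : a 1 ≤ A := ha.monotone h1last
  have hd2 : 2 ≤ d := h1
  have hbpos : 0 < b := by omega
  have hge : ∀ i, d ≤ a i := fun i => ha.monotone (Fin.zero_le i)
  have hle : ∀ i, a i ≤ A := fun i => ha.monotone (Fin.le_last i)
  have hge1 : ∀ i : Fin (r + 1), a 1 ≤ a i.succ := by
    intro i
    apply ha.monotone
    rw [Fin.le_def]
    simp [Fin.val_one]
  have hbig : ∀ x : ℕ, F < x → x ∈ Sn a 1 := by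
    intro x hx
    by_contra hxS
    exact absurd (hF.2 hxS) (by omega)
  have hrepPos : ∀ s m, s ∈ Sn a m → s ≠ 0 →
      ∃ γ : Fin (r + 2) → ℕ, m ≤ ∑ i, γ i ∧ s = ∑ i, a i * γ i := by
    intro s m hs hs0
    rcases (mem_Sn a m s).1 hs with h | h
    · exact absurd h hs0
    · exact h
  have hmemrep : ∀ (m : ℕ) (γ : Fin (r + 2) → ℕ), m ≤ ∑ i, γ i →
      (∑ i, a i * γ i) ∈ Sn a m :=
    fun m γ h => (mem_Sn a m _).2 (Or.inr ⟨γ, h, rfl⟩)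
  have hzero : ∀ m, (0 : ℕ) ∈ Sn a m := fun m => (mem_Sn a m 0).2 (Or.inl rfl)
  have hlb : ∀ s m, s ∈ Sn a m → s ≠ 0 → m * d ≤ s := by
    intro s m hs hs0
    obtain ⟨γ, hγ, rfl⟩ := hrepPos s m hs hs0
    calc m * d ≤ (∑ i, γ i) * d := Nat.mul_le_mul_right d hγ
    _ = ∑ i, d * γ i := by
        rw [Finset.sum_mul]
        exact Finset.sum_congr rfl fun i _ => mul_comm _ _
    _ ≤ ∑ i, a i * γ i := Finset.sum_le_sum fun i _ => Nat.mul_le_mul_right _ (hge i)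
  -- Frobenius-type bound
  have hSbig : ∀ x : ℕ, (d - 1) * (A - 1) ≤ x → x ∈ Sn a 1 := by
    intro x hx
    obtain ⟨α, hw, hc⟩ := exists_small_rep a (by omega) hgcd (x : ZMod d)
    set w := ∑ i, a i * α i with hwdef
    have hwle : w ≤ (d - 1) * A := by
      calc w ≤ ∑ i, A * α i := Finset.sum_le_sum fun i _ => Nat.mul_le_mul_right _ (hle i)
      _ = A * ∑ i, α i := by rw [Finset.mul_sum]
      _ ≤ A * (d - 1) := Nat.mul_le_mul_left _ hw
      _ = (d - 1) * A := mul_comm _ _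
    have hmod : w % d = x % d := by
      haveI : NeZero d := ⟨by omega⟩
      exact (ZMod.natCast_eq_natCast_iff' w x d).1 hc
    have hexp := expand_aux d A (by omega) (by omega)
    have hsub1 : (d - 1) * A = d * A - A := Nat.sub_one_mul d A
    have hAle : A ≤ d * A := Nat.le_mul_of_pos_left A (by omega)
    have hwx : w ≤ x := by
      by_contra hlt
      push_neg at hlt
      have hdvd : d ∣ w - x := (Nat.modEq_iff_dvd' (le_of_lt hlt)).1 hmod.symm
      obtain ⟨t, ht⟩ := hdvd
      have ht1 : 1 ≤ t := by
        rcases Nat.eq_zero_or_pos t with h0 | h0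
        · rw [h0, mul_zero] at ht; omega
        · exact h0
      have hdt : d ≤ d * t := Nat.le_mul_of_pos_right d ht1
      omega
    have hdvd2 : d ∣ x - w := (Nat.modEq_iff_dvd' hwx).1 hmod
    obtain ⟨t, ht⟩ := hdvd2
    by_cases hx0 : x = 0
    · rw [hx0]; exact hzero 1
    · have hwt : 1 ≤ (∑ i, α i) + t := by
        by_contra hsmall
        push_neg at hsmall
        have h0 : (∑ i, α i) = 0 ∧ t = 0 := by omega
        have hall0 : ∀ i ∈ Finset.univ, α i = 0 := Finset.sum_eq_zero_iff.1 h0.1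
        have hw0 : w = 0 := Finset.sum_eq_zero fun i hi => by rw [hall0 i hi, mul_zero]
        apply hx0
        have := h0.2
        rw [this, mul_zero] at ht
        omega
      have hmem := hmemrep 1 (α + Pi.single 0 t)
        (by rw [(rep_add_single a α 0 t).1]; omega)
      have hval : (∑ k, a k * (α + (Pi.single 0 t : Fin (r + 2) → ℕ)) k) = x := by
        rw [(rep_add_single a α 0 t).2, ← hd]
        omega
      rwa [hval] at hmem
  have hFlt : F + 1 ≤ (d - 1) * (A - 1) := by
    by_contra h
    push_neg at h
    exact hF.1 (hSbig F (by omega))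
  have hexp := expand_aux d A (by omega) (by omega)
  have hFb : F + d + A ≤ d * A := by omega
  have hFgtd : d + b < F := by omega
  set q := (F - d) / b with hq
  have hdm := Nat.div_add_mod (F - d) b
  have hτb : τ < b := by rw [hτ]; exact Nat.mod_lt _ hbpos
  have hqτ : b * q + τ = F - d := by rw [hτ]; exact hdm
  have hq1 : 1 ≤ q := by
    rcases Nat.eq_zero_or_pos q with h | h
    · rw [h, mul_zero] at hqτ; omega
    · exact h
  have hM : b * q ≤ d * A - 2 * d - A - τ := by omega
  have hqk : q ≤ (d * A - 2 * d - A - τ) / b := by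
    have h1' : q = b * q / b := (Nat.mul_div_cancel_left q hbpos).symm
    exact h1' ▸ Nat.div_le_div_right hM
  set k := (d * A - 2 * d - A - τ) / b with hk
  have hKEY : F + 1 ≤ b * k + b + d := by
    have h2 : b * q ≤ b * k := Nat.mul_le_mul_left b hqk
    omega
  have hk1 : 1 ≤ k := le_trans hq1 hqk
  apply Nat.sInf_le
  simp only [Set.mem_setOf_eq]
  intro n hn
  have hn1 : 1 ≤ n := le_trans hk1 hn
  -- main structural lemma: every nonzero element of S^{n+1} has a rep of
  -- weight ≥ n+1 using the generator a 0
  have hmain : ∀ s, s ∈ Sn a (n + 1) → s ≠ 0 →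
      ∃ γ : Fin (r + 2) → ℕ, n + 1 ≤ ∑ i, γ i ∧ s = ∑ i, a i * γ i ∧ 1 ≤ γ 0 := by
    intro s hs hs0
    obtain ⟨α, hN, hsum⟩ := hrepPos s (n + 1) hs hs0
    by_cases hα0 : 1 ≤ α 0
    · exact ⟨α, hN, hsum, hα0⟩
    · have hα00 : α 0 = 0 := by omega
      have hNsplit : (∑ i, α i) = ∑ i : Fin (r + 1), α i.succ := by
        rw [Fin.sum_univ_succ, hα00, zero_add]
      have hsplit : s = ∑ i : Fin (r + 1), a i.succ * α i.succ := by
        rw [hsum, Fin.sum_univ_succ, hα00, mul_zero, zero_add]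
      set z := ∑ i : Fin (r + 1), (a i.succ - d) * α i.succ with hz
      have hsz : s = d * (∑ i, α i) + z := by
        rw [hsplit, hNsplit, Finset.mul_sum, ← Finset.sum_add_distrib]
        refine Finset.sum_congr rfl fun i _ => ?_
        have h' : d + (a i.succ - d) = a i.succ := by have := hge i.succ; omega
        rw [← Nat.add_mul, h']
      have hzN : b * (∑ i, α i) ≤ z := by
        rw [hNsplit, Finset.mul_sum]
        refine Finset.sum_le_sum fun i _ => ?_
        have h1' := hge1 i
        have h2' := hge i.succ
        exact Nat.mul_le_mul_right _ (by omega)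
      have hzF : F < z + d := by
        have hbn : b * (n + 1) ≤ b * (∑ i, α i) := Nat.mul_le_mul_left b hN
        have hbk : b * (k + 1) ≤ b * (n + 1) := Nat.mul_le_mul_left b (by omega)
        have hexp2 : b * (k + 1) = b * k + b := by ring
        omega
      obtain ⟨γ, hγ1, hγsum⟩ := hrepPos (z + d) 1 (hbig _ hzF) (by omega)
      refine ⟨γ + Pi.single 0 ((∑ i, α i) - 1), ?_, ?_, ?_⟩
      · rw [(rep_add_single a γ 0 _).1]
        omega
      · rw [(rep_add_single a γ 0 _).2, ← hγsum, ← hd]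
        have hNpos : 1 ≤ ∑ i, α i := by omega
        obtain ⟨N', hN'⟩ := Nat.exists_eq_add_of_le hNpos
        have e : (∑ i, α i) - 1 = N' := by omega
        rw [e]
        rw [hN'] at hsz
        have e2 : d * (1 + N') = d + d * N' := by ring
        omega
      · simp only [Pi.add_apply, Pi.single_eq_same]
        omega
  -- Y = nonzero elements of S^{(n)}
  set Y : Set ℕ := {y | y ≠ 0 ∧ y ∈ Sn a n} with hY
  have hYmem : ∀ y : ℕ, y ∈ Y ↔ y ≠ 0 ∧ y ∈ Sn a n := by
    intro y; rw [hY]; simp only [Set.mem_setOf_eq]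
  have hstep1 : ∀ y, y ∈ Y → y + d ∈ Y := by
    intro y hy
    obtain ⟨hy0, hyS⟩ := (hYmem y).1 hy
    obtain ⟨γ, hγ, hγs⟩ := hrepPos y n hyS hy0
    have hmem := hmemrep n (γ + Pi.single 0 1)
      (by rw [(rep_add_single a γ 0 1).1]; omega)
    have hval : (∑ k, a k * (γ + (Pi.single 0 1 : Fin (r + 2) → ℕ)) k) = y + d := by
      rw [(rep_add_single a γ 0 1).2, ← hγs, ← hd, mul_one]
    rw [hval] at hmem
    exact (hYmem _).2 ⟨by omega, hmem⟩
  have hYmul : ∀ y t, y ∈ Y → y + d * t ∈ Y := by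
    intro y t hy
    induction t with
    | zero => simpa using hy
    | succ t ih =>
      have e : y + d * (t + 1) = (y + d * t) + d := by ring
      rw [e]
      exact hstep1 _ ih
  have hup : ∀ y, y ∈ Y → y + d ∈ Sn a (n + 1) := by
    intro y hy
    obtain ⟨hy0, hyS⟩ := (hYmem y).1 hy
    obtain ⟨γ, hγ, hγs⟩ := hrepPos y n hyS hy0
    have hmem := hmemrep (n + 1) (γ + Pi.single 0 1)
      (by rw [(rep_add_single a γ 0 1).1]; omega)
    have hval : (∑ k, a k * (γ + (Pi.single 0 1 : Fin (r + 2) → ℕ)) k) = y + d := by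
      rw [(rep_add_single a γ 0 1).2, ← hγs, ← hd, mul_one]
    rwa [hval] at hmem
  have hdown : ∀ s, s ∈ Sn a (n + 1) → s ≠ 0 → ∃ y ∈ Y, s = y + d := by
    intro s hs hs0
    obtain ⟨γ, hγ, hγs, hγ0⟩ := hmain s hs hs0
    have hslb : (n + 1) * d ≤ s := hlb s (n + 1) hs hs0
    have h2d : 2 * d ≤ (n + 1) * d := Nat.mul_le_mul_right d (by omega)
    obtain ⟨c', hc'⟩ := Nat.exists_eq_add_of_le hγ0
    set γ' : Fin (r + 2) → ℕ := Function.update γ 0 c' with hγ'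
    have e1 : (∑ i, γ i) = γ 0 + ∑ i : Fin (r + 1), γ i.succ := Fin.sum_univ_succ γ
    have e2 : (∑ i, γ' i) = γ' 0 + ∑ i : Fin (r + 1), γ' i.succ := Fin.sum_univ_succ γ'
    have e3 : γ' 0 = c' := Function.update_self 0 c' γ
    have e4 : ∀ i : Fin (r + 1), γ' i.succ = γ i.succ :=
      fun i => Function.update_of_ne (Fin.succ_ne_zero i) c' γ
    have e5 : (∑ i : Fin (r + 1), γ' i.succ) = ∑ i : Fin (r + 1), γ i.succ :=
      Finset.sum_congr rfl fun i _ => e4 i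
    have hsum' : (∑ i, γ' i) + 1 = (∑ i, γ i) := by
      rw [e2, e3, e5, e1]; omega
    have f1 : s = a 0 * γ 0 + ∑ i : Fin (r + 1), a i.succ * γ i.succ := by
      rw [hγs, Fin.sum_univ_succ]
    have f2 : (∑ i, a i * γ' i) = a 0 * γ' 0 + ∑ i : Fin (r + 1), a i.succ * γ' i.succ :=
      Fin.sum_univ_succ _
    have f3 : (∑ i : Fin (r + 1), a i.succ * γ' i.succ) = ∑ i : Fin (r + 1), a i.succ * γ i.succ :=
      Finset.sum_congr rfl fun i _ => by rw [e4 i]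
    have hval' : (∑ i, a i * γ' i) + d = s := by
      rw [f2, e3, f3, f1, hc', ← hd]
      have e6 : d * (1 + c') = d + d * c' := by ring
      omega
    have hmem := hmemrep n γ' (by omega)
    refine ⟨∑ i, a i * γ' i, (hYmem _).2 ⟨?_, hmem⟩, by omega⟩
    omega
  -- residue class minima
  have hclass : ∀ c, c < d → ∃ y, y ∈ Y ∧ y % d = c := by
    intro c hc
    have hdm2 := Nat.div_add_mod F d
    have hmodF : F % d < d := Nat.mod_lt _ (by omega)
    set x := d * (F / d + 1) + c with hx
    have hxF : F < x := by
      have e : d * (F / d + 1) = d * (F / d) + d := by ring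
      omega
    have hx0 : x ≠ 0 := by omega
    obtain ⟨γ, hγ1, hγs⟩ := hrepPos x 1 (hbig x hxF) hx0
    have hmem := hmemrep n (γ + Pi.single 0 n)
      (by rw [(rep_add_single a γ 0 n).1]; omega)
    have hval : (∑ k, a k * (γ + (Pi.single 0 n : Fin (r + 2) → ℕ)) k) = x + d * n := by
      rw [(rep_add_single a γ 0 n).2, ← hγs, ← hd]
    rw [hval] at hmem
    refine ⟨x + d * n, (hYmem _).2 ⟨by omega, hmem⟩, ?_⟩
    have e : x + d * n = d * (F / d + 1 + n) + c := by rw [hx]; ring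
    rw [e, Nat.mul_add_mod]
    exact Nat.mod_eq_of_lt hc
  set mc : ℕ → ℕ := fun c => sInf {y | y ∈ Y ∧ y % d = c} with hmc
  have hmcmem : ∀ c, c < d → mc c ∈ Y ∧ mc c % d = c := by
    intro c hc
    obtain ⟨y, hy⟩ := hclass c hc
    have hne : {y0 : ℕ | y0 ∈ Y ∧ y0 % d = c}.Nonempty := ⟨y, hy⟩
    exact Nat.sInf_mem hne
  have hmcle : ∀ c y, y ∈ Y → y % d = c → mc c ≤ y :=
    fun c y h1' h2' => Nat.sInf_le ⟨h1', h2'⟩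
  have hD : Sn a n \ Sn a (n + 1) = mc '' (Set.Iio d) := by
    ext s
    constructor
    · rintro ⟨hs1, hs2⟩
      have hs0 : s ≠ 0 := fun h => hs2 (h ▸ hzero (n + 1))
      have hsY : s ∈ Y := (hYmem s).2 ⟨hs0, hs1⟩
      have hc : s % d < d := Nat.mod_lt _ (by omega)
      refine ⟨s % d, hc, ?_⟩
      have hle' := hmcle (s % d) s hsY rfl
      rcases eq_or_lt_of_le hle' with he | hlt
      · exact he
      · exfalso
        obtain ⟨hmY, hmmod⟩ := hmcmem (s % d) hc
        have hdvd : d ∣ s - mc (s % d) := by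
          refine (Nat.modEq_iff_dvd' (le_of_lt hlt)).1 ?_
          show mc (s % d) % d = s % d
          exact hmmod
        obtain ⟨t, ht⟩ := hdvd
        have ht1 : 1 ≤ t := by
          rcases Nat.eq_zero_or_pos t with h0 | h0
          · rw [h0, mul_zero] at ht; omega
          · exact h0
        obtain ⟨t', rfl⟩ := Nat.exists_eq_add_of_le ht1
        have hyY : mc (s % d) + d * t' ∈ Y := hYmul _ t' hmY
        have he2 : s = (mc (s % d) + d * t') + d := by
          have e : d * (1 + t') = d + d * t' := by ring
          omega
        exact hs2 (he2 ▸ hup _ hyY)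
    · rintro ⟨c, hc, rfl⟩
      obtain ⟨hmY, hmmod⟩ := hmcmem c hc
      obtain ⟨hm0, hmS⟩ := (hYmem _).1 hmY
      refine ⟨hmS, ?_⟩
      intro hmem
      obtain ⟨y, hyY, he⟩ := hdown (mc c) hmem hm0
      have hymod : y % d = c := by
        rw [← hmmod, he, Nat.add_mod_right]
      have := hmcle c y hyY hymod
      omega
  rw [hD]
  have hinj : Set.InjOn mc (Set.Iio d) := by
    intro c1 hc1 c2 hc2 he
    have e1 := (hmcmem c1 hc1).2
    have e2 := (hmcmem c2 hc2).2
    rw [← e1, ← e2, he]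
  rw [Set.ncard_image_of_injOn hinj, ← Finset.coe_range, Set.ncard_coe_finset,
    Finset.card_range]
end

section
/- Let a₁ < a₂ be coprime with 1 < a₁ and let n ≥ a₁ - 1. If β₁, β₂, j ∈ ℕ satisfy a₁β₁ + a₂β₂ = a₁(n - j) + a₂j, with β₁ + β₂ ≥ n + 1 and 0 ≤ j ≤ a₁ - 1 ≤ n, then a contradiction follows; in particular the values a₁(n-j) + a₂j for j = 0, ..., a₁-1 are pairwise distinct. -/
theorem stmt_17 (a₁ a₂ : ℕ) (h1 : 1 < a₁) (h12 : a₁ < a₂)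
    (hcop : Nat.Coprime a₁ a₂) (n : ℕ) (hn : a₁ - 1 ≤ n) :
    (∀ β₁ β₂ j : ℕ, j ≤ a₁ - 1 →
      n + 1 ≤ β₁ + β₂ → a₁ * β₁ + a₂ * β₂ = a₁ * (n - j) + a₂ * j → False) ∧
    (∀ j j' : ℕ, j ≤ a₁ - 1 → j' ≤ a₁ - 1 → j ≠ j' →
      a₁ * (n - j) + a₂ * j ≠ a₁ * (n - j') + a₂ * j') := by
  have ha₁ : 0 < a₁ := by omega
  have key : ∀ x y : ℕ, x ≤ a₁ - 1 → a₂ * y ≡ a₂ * x [MOD a₁] → y % a₁ = x := by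
    intro x y hx h
    have h' : y ≡ x [MOD a₁] :=
      Nat.ModEq.cancel_left_of_coprime (by simpa [Nat.coprime_comm] using hcop) h
    have hxlt : x < a₁ := by omega
    simpa [Nat.ModEq, Nat.mod_eq_of_lt hxlt] using h'
  constructor
  · intro β₁ β₂ j hj hsum heq
    have hmod : a₂ * β₂ ≡ a₂ * j [MOD a₁] := by
      have h' := congrArg (· % a₁) heq
      simpa [Nat.ModEq, Nat.add_mod, Nat.mul_mod_right] using h'
    have hβ₂ : β₂ % a₁ = j := key j β₂ hj hmod
    have hjβ : j ≤ β₂ := hβ₂ ▸ Nat.mod_le β₂ a₁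
    have hjn : j ≤ n := by omega
    -- write β₂ = j + t
    obtain ⟨t, rfl⟩ : ∃ t, β₂ = j + t := ⟨β₂ - j, by omega⟩
    have heq' : a₁ * β₁ + a₂ * t = a₁ * (n - j) := by
      have : a₁ * β₁ + (a₂ * j + a₂ * t) = a₁ * (n - j) + a₂ * j := by
        rw [← heq]; ring
      omega
    have hle : a₁ * (β₁ + t) ≤ a₁ * β₁ + a₂ * t := by
      have : a₁ * t ≤ a₂ * t := Nat.mul_le_mul_right t (le_of_lt h12)
      calc a₁ * (β₁ + t) = a₁ * β₁ + a₁ * t := by ring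
        _ ≤ a₁ * β₁ + a₂ * t := by omega
    have h1' : a₁ * ((n - j) + 1) ≤ a₁ * (β₁ + t) :=
      Nat.mul_le_mul_left a₁ (by omega)
    have h2' : a₁ * ((n - j) + 1) = a₁ * (n - j) + a₁ := by ring
    omega
  · intro j j' hj hj' hne heq
    have hmod : a₂ * j ≡ a₂ * j' [MOD a₁] := by
      have h' := congrArg (· % a₁) heq
      simpa [Nat.ModEq, Nat.add_mod, Nat.mul_mod_right] using h'
    have := key j' j hj' hmod
    have hjlt : j < a₁ := by omega
    rw [Nat.mod_eq_of_lt hjlt] at this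
    exact hne this
end

section
/- Let S = ⟨a₁,...,a_r⟩ with a₂ < F(S) and q as in Theorem (F(S) - a₁ = q(a₂-a₁) + τ). For n ≥ q, if s ∈ S⁽ⁿ⁺¹⁾ and s > F(S⁽ⁿ⁺¹⁾) then s - a₁ ∈ S⁽ⁿ⁾; and if 0 < s < F(S⁽ⁿ⁺¹⁾) then any representation s = a·α with |α| ≥ n+1 must have α₁ ≥ 1. -/
theorem stmt_18 (r : ℕ) (a : Fin (r + 2) → ℕ)
    (ha : StrictMono a) (h1 : 1 < a 0)
    (hgcd : Finset.univ.gcd a = 1)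
    (hmin : ∀ i, a i ∉ AddSubmonoid.closure (a '' {i}ᶜ))
    (F : ℕ) (hF : IsGreatest {m : ℕ | m ∉ Sn a 1} F) (hFa2 : a 1 < F)
    (q τ : ℕ) (hq : 1 ≤ q) (hτ : τ < a 1 - a 0)
    (hdecomp : F - a 0 = q * (a 1 - a 0) + τ)
    (n : ℕ) (hn : q ≤ n) (Fn1 : ℕ)
    (hFn1 : IsGreatest {m : ℕ | m ∉ Sn a (n + 1)} Fn1) :
    (∀ s : ℕ, s ∈ Sn a (n + 1) → Fn1 < s → s - a 0 ∈ Sn a n) ∧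
    (∀ s : ℕ, 0 < s → s < Fn1 →
      ∀ α : Fin (r + 2) → ℕ, n + 1 ≤ ∑ i, α i → s = ∑ i, a i * α i →
        1 ≤ α 0) := by
  have mem_iff : ∀ (m k : ℕ), m ∈ Sn a k ↔
      m = 0 ∨ ∃ α : Fin (r+2) → ℕ, k ≤ ∑ i, α i ∧ m = ∑ i, a i * α i := by
    intro m k
    simp [Sn, Set.mem_union, Set.mem_singleton_iff, Set.mem_setOf_eq]
  have ha01 : a 0 < a 1 := ha (by rw [Fin.lt_def]; simp)
  have ha0F : a 0 < F := lt_trans ha01 hFa2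
  -- key inequality : F + n * a 0 < (n+1) * a 1
  have hkey : F + n * a 0 < (n + 1) * a 1 := by
    set d := a 1 - a 0 with hd
    set Qd := q * d with hQd
    have hFeq : F = a 0 + Qd + τ := by omega
    have h1' : Qd ≤ n * d := by rw [hQd]; exact Nat.mul_le_mul_right d hn
    have hr : (n + 1) * a 1 = n * a 0 + a 0 + n * d + d := by
      have h : a 1 = a 0 + d := by omega
      rw [h]; ring
    rw [hr, hFeq]
    linarith
  have hS1 : ∀ m, F < m → m ∈ Sn a 1 := by
    intro m hm
    by_contra h
    exact absurd (hF.2 h) (by omega)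
  -- the main membership lemma
  have P : ∀ k m, F + k * a 0 < m → m ∈ Sn a (k + 1) := by
    intro k
    induction k with
    | zero => intro m hm; exact hS1 m (by simpa using hm)
    | succ k ih =>
      intro m hm
      have hk1 : (k + 1) * a 0 = k * a 0 + a 0 := by ring
      have h0 : F + k * a 0 < m - a 0 := by omega
      rcases (mem_iff (m - a 0) (k + 1)).1 (ih (m - a 0) h0) with h | ⟨α, hα1, hα2⟩
      · omega
      · refine (mem_iff m (k + 2)).2
          (Or.inr ⟨Fin.cons (α 0 + 1) (fun i => α i.succ), ?_, ?_⟩)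
        · rw [Fin.sum_univ_succ] at hα1
          rw [Fin.sum_univ_succ]
          simp only [Fin.cons_zero, Fin.cons_succ]
          omega
        · rw [Fin.sum_univ_succ] at hα2
          rw [Fin.sum_univ_succ]
          simp only [Fin.cons_zero, Fin.cons_succ]
          have h : a 0 * (α 0 + 1) = a 0 * α 0 + a 0 := by ring
          omega
  -- lower bound when α 0 = 0
  have lbound : ∀ (s : ℕ) (α : Fin (r+2) → ℕ), α 0 = 0 → n + 1 ≤ ∑ i, α i →
      s = ∑ i, a i * α i → (n + 1) * a 1 ≤ s := by
    intro s α h0 hα1 hα2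
    have hmono : ∀ i : Fin (r+1), a 1 ≤ a i.succ := by
      intro i
      apply ha.monotone
      rw [Fin.le_def]
      simp [Fin.val_succ]
    have htail : n + 1 ≤ ∑ i : Fin (r+1), α i.succ := by
      rw [Fin.sum_univ_succ] at hα1; omega
    rw [hα2, Fin.sum_univ_succ]
    calc (n + 1) * a 1 = a 1 * (n + 1) := mul_comm _ _
      _ ≤ a 1 * ∑ i : Fin (r+1), α i.succ := Nat.mul_le_mul_left _ htail
      _ = ∑ i : Fin (r+1), a 1 * α i.succ := Finset.mul_sum _ _ _
      _ ≤ ∑ i : Fin (r+1), a i.succ * α i.succ :=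
          Finset.sum_le_sum (fun i _ => Nat.mul_le_mul_right _ (hmono i))
      _ ≤ a 0 * α 0 + ∑ i : Fin (r+1), a i.succ * α i.succ := Nat.le_add_left _ _
  constructor
  · intro s hs hgt
    rcases (mem_iff s (n + 1)).1 hs with rfl | ⟨α, hα1, hα2⟩
    · omega
    · by_cases h0 : 1 ≤ α 0
      · obtain ⟨b, hb⟩ : ∃ b, α 0 = b + 1 := ⟨α 0 - 1, by omega⟩
        refine (mem_iff (s - a 0) n).2
          (Or.inr ⟨Fin.cons b (fun i => α i.succ), ?_, ?_⟩)
        · rw [Fin.sum_univ_succ] at hα1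
          rw [Fin.sum_univ_succ]
          simp only [Fin.cons_zero, Fin.cons_succ]
          omega
        · rw [Fin.sum_univ_succ, hb] at hα2
          rw [Fin.sum_univ_succ]
          simp only [Fin.cons_zero, Fin.cons_succ]
          have h : a 0 * (b + 1) = a 0 * b + a 0 := by ring
          omega
      · have hz : α 0 = 0 := by omega
        have hs1 : (n + 1) * a 1 ≤ s := lbound s α hz hα1 hα2
        obtain ⟨p, hp⟩ : ∃ p, n = p + 1 := ⟨n - 1, by omega⟩
        have hna : n * a 0 = p * a 0 + a 0 := by rw [hp]; ring
        have := P p (s - a 0) (by omega)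
        rw [hp]; exact this
  · intro s hs hlt α hα1 hα2
    by_contra h
    have hz : α 0 = 0 := by omega
    have hs1 : (n + 1) * a 1 ≤ s := lbound s α hz hα1 hα2
    have hFn1lt : Fn1 < (n + 1) * a 1 := by
      by_contra hge
      exact hFn1.1 (P n Fn1 (by omega))
    omega
end
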